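/- arXiv:2010.10228 — 10 statements merged into one kernel-verified Lean document; each statement's English description precedes it below -/
import Mathlib

section
/- Let K be a field of characteristic zero, δ = I − φ the E-derivation of K[x₁,...,xₙ] where φ is the K-algebra endomorphism with φ(xᵢ) = λᵢ xᵢ + fᵢ(x_{i+1},...,xₙ) for fᵢ ∈ K[x_{i+1},...,xₙ] (with fₙ ∈ K) and λᵢ ≠ 1 for all i. Then there exists a translation automorphism σ of K[x₁,...,xₙ] (σ(xᵢ) = xᵢ + cᵢ for constants cᵢ ∈ K) such that σ⁻¹ ∘ δ ∘ σ = I − φ̃ where φ̃(xᵢ) = λᵢ xᵢ + f̃ᵢ(x_{i+1},...,xₙ) with f̃ᵢ(0,...,0) = 0 for all i. -/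
open MvPolynomial

private lemma eval_congr_supported {K : Type*} [Field K] {n : ℕ} {s : Set (Fin n)}
    {p : MvPolynomial (Fin n) K} (hp : p ∈ supported K s) {v w : Fin n → K}
    (h : ∀ j ∈ s, v j = w j) : eval v p = eval w p := by
  have hv := (mem_supported).1 hp
  exact eval₂Hom_congr' rfl (fun i hi _ => h i (hv hi)) rfl

private lemma exists_c {K : Type*} [Field K] {n : ℕ}
    (l : Fin n → K) (hl : ∀ i, l i ≠ 1)
    (f : Fin n → MvPolynomial (Fin n) K)
    (hf : ∀ i, f i ∈ MvPolynomial.supported K {j : Fin n | i < j}) :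
    ∃ c : Fin n → K, ∀ i,
      eval (fun j => -c j) (f i) + (1 - l i) * c i = 0 := by
  have key : ∀ k : ℕ, ∃ c : Fin n → K, ∀ i : Fin n, n - k ≤ i.val →
      eval (fun j => -c j) (f i) + (1 - l i) * c i = 0 := by
    intro k
    induction k with
    | zero =>
      exact ⟨0, fun i hi => absurd hi (by have := i.isLt; omega)⟩
    | succ k ih =>
      obtain ⟨c, hc⟩ := ih
      by_cases hk : n - (k + 1) = n - k
      · exact ⟨c, fun i hi => hc i (by omega)⟩
      · have hm : n - (k + 1) < n := by omega
        set i0 : Fin n := ⟨n - (k + 1), hm⟩ with hi0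
        set c' := Function.update c i0 ((l i0 - 1)⁻¹ * eval (fun j => -c j) (f i0)) with hc'
        have hupd : ∀ j : Fin n, j ≠ i0 → c' j = c j := by
          intro j hj; simp [hc', Function.update_of_ne hj]
        have heq : ∀ i : Fin n, i0 ≤ i →
            eval (fun j => -c' j) (f i) = eval (fun j => -c j) (f i) := by
          intro i hi
          refine eval_congr_supported (hf i) (fun j hj => ?_)
          have : j ≠ i0 := by
            intro h; rw [h] at hj; exact absurd (lt_of_le_of_lt hi hj) (lt_irrefl _)
          rw [hupd j this]
        refine ⟨c', fun i hi => ?_⟩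
        by_cases hii : i = i0
        · rw [hii, heq i0 le_rfl]
          have : c' i0 = (l i0 - 1)⁻¹ * eval (fun j => -c j) (f i0) := by
            simp [hc']
          rw [this]
          have hne : l i0 - 1 ≠ 0 := sub_ne_zero.mpr (hl i0)
          field_simp
          ring
        · have hlt : i0 < i := by
            refine lt_of_le_of_ne ?_ (Ne.symm hii)
            exact Fin.mk_le_of_le_val hi
          rw [heq i hlt.le, hupd i hii]
          exact hc i (by have := hlt; simp [hi0, Fin.lt_def] at this; omega)
  obtain ⟨c, hc⟩ := key n
  exact ⟨c, fun i => hc i (by omega)⟩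

theorem stmt_4 (K : Type*) [Field K] [CharZero K] (n : ℕ)
    (l : Fin n → K) (hl : ∀ i, l i ≠ 1)
    (f : Fin n → MvPolynomial (Fin n) K)
    (hf : ∀ i, f i ∈ MvPolynomial.supported K {j : Fin n | i < j})
    (φ : MvPolynomial (Fin n) K →ₐ[K] MvPolynomial (Fin n) K)
    (hφ : φ = aeval (fun i => C (l i) * X i + f i)) :
    ∃ (c : Fin n → K) (ft : Fin n → MvPolynomial (Fin n) K),
      (∀ i, ft i ∈ MvPolynomial.supported K {j : Fin n | i < j}) ∧
      (∀ i, constantCoeff (ft i) = 0) ∧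
      (∀ p : MvPolynomial (Fin n) K,
        aeval (fun i => X i - C (c i))
            ((aeval (fun i => X i + C (c i)) p)
              - φ (aeval (fun i => X i + C (c i)) p))
          = p - aeval (fun i => C (l i) * X i + ft i) p) := by
  obtain ⟨c, hc⟩ := exists_c l hl f hf
  set τ : MvPolynomial (Fin n) K →ₐ[K] MvPolynomial (Fin n) K :=
    aeval (fun i => X i - C (c i)) with hτ
  set σa : MvPolynomial (Fin n) K →ₐ[K] MvPolynomial (Fin n) K :=
    aeval (fun i => X i + C (c i)) with hσ
  set ft : Fin n → MvPolynomial (Fin n) K :=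
    fun i => τ (f i) + C ((1 - l i) * c i) with hft
  refine ⟨c, ft, ?_, ?_, ?_⟩
  · -- supported
    intro i
    refine add_mem ?_ ?_
    · have h1 : τ (f i) ∈ (supported K {j : Fin n | i < j}).map τ :=
        Subalgebra.mem_map.2 ⟨f i, hf i, rfl⟩
      rw [supported_eq_adjoin_X, AlgHom.map_adjoin] at h1
      refine Algebra.adjoin_le ?_ h1
      rintro q ⟨_, ⟨j, hj, rfl⟩, rfl⟩
      have : τ (X j) = X j - C (c j) := by simp [hτ]
      rw [this]
      exact sub_mem (X_mem_supported.2 hj)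
        (Subalgebra.algebraMap_mem (supported K {j : Fin n | i < j}) (c j))
    · exact Subalgebra.algebraMap_mem (supported K {j : Fin n | i < j}) ((1 - l i) * c i)
  · -- constant coeff
    intro i
    have h0 : constantCoeff (τ (f i)) = eval (fun j => -c j) (f i) := by
      have h1 : aeval (fun _ => (0 : K)) (τ (f i))
          = aeval (fun j => aeval (fun _ => (0 : K)) (X j - C (c j))) (f i) := by
        rw [hτ]
        exact DFunLike.congr_fun
          (comp_aeval (φ := aeval (fun _ => (0 : K)))
            (f := fun i => X i - C (c i))) (f i)
      simp only [map_sub, aeval_X, aeval_C, Algebra.algebraMap_self_apply, zero_sub] at h1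
      rw [aeval_zero'] at h1
      simp only [Algebra.algebraMap_self_apply] at h1
      rw [h1, ← coe_aeval_eq_eval]
      rfl
    simp only [hft, map_add, constantCoeff_C, h0]
    exact hc i
  · -- main identity
    intro p
    have hτσ : τ.comp σa = AlgHom.id K _ := by
      apply MvPolynomial.algHom_ext
      intro i
      simp [hτ, hσ]
    have hcomp : τ.comp (φ.comp σa) = aeval (fun i => C (l i) * X i + ft i) := by
      apply MvPolynomial.algHom_ext
      intro i
      have h1 : φ (σa (X i)) = C (l i) * X i + f i + C (c i) := by
        simp [hσ, hφ, map_add]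
      simp only [AlgHom.comp_apply, h1, map_add, map_mul]
      have h2 : τ (C (l i)) = C (l i) := by simp [hτ]
      have h3 : τ (X i) = X i - C (c i) := by simp [hτ]
      have h4 : τ (C (c i)) = C (c i) := by simp [hτ]
      rw [h2, h3, h4]
      simp only [aeval_X, hft]
      rw [C_mul, C_sub, C_1]
      ring
    rw [map_sub]
    have e1 : τ (σa p) = p := DFunLike.congr_fun hτσ p
    have e2 : τ (φ (σa p)) = aeval (fun i => C (l i) * X i + ft i) p :=
      DFunLike.congr_fun hcomp p
    rw [e1, e2]
end

section
/- Let K be an algebraically closed field of characteristic zero, A ∈ Mₙ(K) an upper triangular matrix with diagonal entries λ₁₁,...,λₙₙ, and φ the linear endomorphism of K[x₁,...,xₙ] with φ(xᵢ) = Σ_{j≥i} λ_{ij} xⱼ. Let δ = I − φ. If λ_{kk}^{i_k} ⋯ λ_{nn}^{i_n} ≠ 1 for all natural numbers i_k,...,i_n with i_k + ⋯ + i_n ≥ 1 and all 1 ≤ k ≤ n, then Im δ is the ideal generated by x₁,...,xₙ. -/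
open MvPolynomial

namespace Aux6

variable {K : Type*} [Field K] {n : ℕ}

def Mw (n : ℕ) (e : Fin n →₀ ℕ) : ℕ := ∑ i, e i * (n - (i : ℕ))

lemma Mw_add (f g : Fin n →₀ ℕ) : Mw n (f + g) = Mw n f + Mw n g := by
  simp [Mw, add_mul, Finset.sum_add_distrib]

lemma Mw_single (j : Fin n) : Mw n (Finsupp.single j 1) = n - (j : ℕ) := by
  rw [Mw, Finset.sum_eq_single j]
  · simp
  · intro b _ hb
    simp [Finsupp.single_apply, Ne.symm hb]
  · simp

lemma Mw_pos {e : Fin n →₀ ℕ} (he : e ≠ 0) : 1 ≤ Mw n e := by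
  obtain ⟨i, hi⟩ := Finsupp.ne_iff.mp he
  simp only [Finsupp.coe_zero, Pi.zero_apply] at hi
  calc 1 ≤ e i * (n - (i : ℕ)) := by
        have := i.isLt; have : 1 ≤ n - (i : ℕ) := by omega
        have : 1 ≤ e i := Nat.one_le_iff_ne_zero.mpr hi
        nlinarith
    _ ≤ Mw n e :=
        Finset.single_le_sum (f := fun j => e j * (n - (j : ℕ)))
          (fun j _ => Nat.zero_le _) (Finset.mem_univ i)

noncomputable def Wsp (K : Type*) [Field K] (n m : ℕ) : Submodule K (MvPolynomial (Fin n) K) :=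
  Submodule.span K {p | ∃ g : Fin n →₀ ℕ, g ≠ 0 ∧ Mw n g ≤ m ∧ p = monomial g 1}

lemma Wsp_mono {m m' : ℕ} (h : m ≤ m') : Wsp K n m ≤ Wsp K n m' :=
  Submodule.span_mono (fun p ⟨g, hg, hm, hp⟩ => ⟨g, hg, hm.trans h, hp⟩)

lemma Wsp_zero : Wsp K n 0 = ⊥ := by
  rw [Wsp, Submodule.span_eq_bot]
  rintro x ⟨g, hg, hm, rfl⟩
  exact absurd hm (by have := Mw_pos (n := n) hg; omega)

lemma monomial_mul_Wsp {m : ℕ} (g : Fin n →₀ ℕ) (c : K) {w : MvPolynomial (Fin n) K}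
    (hw : w ∈ Wsp K n m) : (monomial g c) * w ∈ Wsp K n (Mw n g + m) := by
  induction hw using Submodule.span_induction with
  | mem x hx =>
    obtain ⟨h, hh0, hhm, rfl⟩ := hx
    rw [monomial_mul]
    have heq : monomial (g + h) (c * 1) = c • monomial (g + h) (1 : K) := by
      rw [smul_monomial, smul_eq_mul]
    rw [heq]
    refine Submodule.smul_mem _ _ (Submodule.subset_span ?_)
    refine ⟨g + h, fun hgz => hh0 ?_, by rw [Mw_add]; omega, rfl⟩
    have := Finsupp.ext_iff.mp hgz
    ext j; have := this j; simp only [Finsupp.add_apply, Finsupp.coe_zero, Pi.zero_apply] at this ⊢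
    omega
  | zero => rw [mul_zero]; exact zero_mem _
  | add x y _ _ hx hy => rw [mul_add]; exact add_mem hx hy
  | smul a x _ hx => rw [mul_smul_comm]; exact Submodule.smul_mem _ _ hx

lemma Wsp_mul {m1 m2 : ℕ} {a b : MvPolynomial (Fin n) K}
    (ha : a ∈ Wsp K n m1) (hb : b ∈ Wsp K n m2) : a * b ∈ Wsp K n (m1 + m2) := by
  induction hb using Submodule.span_induction with
  | mem x hx =>
    obtain ⟨h, hh0, hhm, rfl⟩ := hx
    rw [mul_comm]
    exact Wsp_mono (by omega) (monomial_mul_Wsp h 1 ha)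
  | zero => rw [mul_zero]; exact zero_mem _
  | add x y _ _ hx hy => rw [mul_add]; exact add_mem hx hy
  | smul r x _ hx => rw [mul_smul_comm]; exact Submodule.smul_mem _ _ hx


lemma key (A : Matrix (Fin n) (Fin n) K) (hA : ∀ i j : Fin n, j < i → A i j = 0) :
    ∀ (N : ℕ) (e : Fin n →₀ ℕ), Mw n e ≤ N →
      aeval (fun i => ∑ j, C (A i j) * X j) (monomial e (1 : K))
        - C (∏ j, A j j ^ e j) * monomial e 1 ∈ Wsp K n (Mw n e - 1) := by
  intro N
  induction N with
  | zero =>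
    intro e he
    have he0 : e = 0 := by
      by_contra h
      exact absurd he (by have := Mw_pos (n := n) h; omega)
    subst he0
    simp
  | succ N ih =>
    intro e he
    by_cases he0 : e = 0
    · subst he0; simp
    obtain ⟨i, hi⟩ := Finsupp.ne_iff.mp he0
    simp only [Finsupp.coe_zero, Pi.zero_apply] at hi
    have hin : (i : ℕ) < n := i.isLt
    set f : Fin n →₀ ℕ := e - Finsupp.single i 1 with hf_def
    have hef : e = f + Finsupp.single i 1 := by
      ext j
      simp only [hf_def, Finsupp.add_apply, Finsupp.tsub_apply, Finsupp.single_apply]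
      rcases eq_or_ne i j with rfl | hne
      · simp; omega
      · simp [hne]
    have hMe : Mw n e = Mw n f + (n - (i : ℕ)) := by
      rw [hef, Mw_add, Mw_single]
    have hfN : Mw n f ≤ N := by omega
    set Φ := (aeval (fun i => ∑ j, C (A i j) * X j) :
      MvPolynomial (Fin n) K →ₐ[K] MvPolynomial (Fin n) K) with hΦ_def
    set c : K := ∏ j, A j j ^ f j with hc_def
    set rf : MvPolynomial (Fin n) K := Φ (monomial f 1) - C c * monomial f 1 with hrf_def
    have hrf : rf ∈ Wsp K n (Mw n f - 1) := ih f hfN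
    set ri : MvPolynomial (Fin n) K := Φ (X i) - C (A i i) * X i with hri_def
    have hXi : Φ (X i) = C (A i i) * X i + ∑ j ∈ Finset.univ.erase i, C (A i j) * X j := by
      rw [hΦ_def, aeval_X]
      rw [← Finset.add_sum_erase _ _ (Finset.mem_univ i)]
    have hri : ri ∈ Wsp K n (n - (i : ℕ) - 1) := by
      have : ri = ∑ j ∈ Finset.univ.erase i, C (A i j) * X j := by
        rw [hri_def, hXi]; ring
      rw [this]
      refine Submodule.sum_mem _ (fun j hj => ?_)
      have hji : j ≠ i := Finset.ne_of_mem_erase hj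
      rcases lt_or_gt_of_ne hji with hlt | hgt
      · rw [hA i j hlt]; simp
      · have hX : (X j : MvPolynomial (Fin n) K) = monomial (Finsupp.single j 1) 1 := rfl
        have : C (A i j) * X j = (A i j) • monomial (Finsupp.single j 1) (1 : K) := by
          rw [hX, smul_monomial, smul_eq_mul, mul_one, C_mul_monomial, mul_one]
        rw [this]
        refine Submodule.smul_mem _ _ (Submodule.subset_span ?_)
        refine ⟨Finsupp.single j 1, fun h => one_ne_zero (Finsupp.single_eq_zero.mp h), ?_, rfl⟩
        rw [Mw_single]
        have : (i : ℕ) < (j : ℕ) := hgt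
        omega
    -- algebraic expansion
    have hprod : (∏ j, A j j ^ e j) = c * A i i := by
      rw [hef, hc_def]
      simp only [Finsupp.add_apply, pow_add, Finset.prod_mul_distrib]
      congr 1
      rw [Finset.prod_eq_single i]
      · simp
      · intro b _ hb; simp [Finsupp.single_apply, Ne.symm hb]
      · simp
    have hsplit : monomial e (1 : K) = monomial f 1 * X i := by
      have hX : (X i : MvPolynomial (Fin n) K) = monomial (Finsupp.single i 1) 1 := rfl
      rw [hX, monomial_mul, mul_one, ← hef]
    have heq : Φ (monomial e 1) - C (∏ j, A j j ^ e j) * monomial e 1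
        = (C c * monomial f 1) * ri + rf * (C (A i i) * X i) + rf * ri := by
      rw [hsplit, map_mul, hprod, hrf_def, hri_def, C_mul]
      ring
    rw [heq]
    have hT1 : (C c * monomial f 1) * ri ∈ Wsp K n (Mw n e - 1) := by
      have hmono : C c * monomial f 1 = monomial f c := by
        rw [C_mul_monomial, mul_one]
      rw [hmono]
      exact Wsp_mono (by omega) (monomial_mul_Wsp f c hri)
    have hT2 : rf * (C (A i i) * X i) ∈ Wsp K n (Mw n e - 1) := by
      by_cases hf0 : f = 0
      · have : rf = 0 := by
          have hm0 : Mw n f - 1 = 0 := by rw [hf0]; simp [Mw]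
          have h2 := hrf
          rw [hm0, Wsp_zero] at h2
          simpa using h2
        rw [this, zero_mul]; exact zero_mem _
      · have h1 : 1 ≤ Mw n f := Mw_pos hf0
        have hmono : C (A i i) * X i = monomial (Finsupp.single i 1) (A i i) := by
          have hX : (X i : MvPolynomial (Fin n) K) = monomial (Finsupp.single i 1) 1 := rfl
          rw [hX, C_mul_monomial, mul_one]
        rw [mul_comm, hmono]
        refine Wsp_mono ?_ (monomial_mul_Wsp (Finsupp.single i 1) (A i i) hrf)
        rw [Mw_single]; omega
    have hT3 : rf * ri ∈ Wsp K n (Mw n e - 1) :=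
      Wsp_mono (by omega) (Wsp_mul hrf hri)
    exact add_mem (add_mem hT1 hT2) hT3

lemma Wsp_le {m : ℕ} {S : Submodule K (MvPolynomial (Fin n) K)}
    (h : ∀ g : Fin n →₀ ℕ, g ≠ 0 → Mw n g ≤ m → monomial g 1 ∈ S) :
    Wsp K n m ≤ S := by
  refine Submodule.span_le.mpr ?_
  rintro x ⟨g, hg0, hgm, rfl⟩
  exact h g hg0 hgm

end Aux6

theorem stmt_6 (K : Type*) [Field K] [IsAlgClosed K] [CharZero K] (n : ℕ)
    (A : Matrix (Fin n) (Fin n) K) (hA : ∀ i j : Fin n, j < i → A i j = 0)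
    (φ : MvPolynomial (Fin n) K →ₐ[K] MvPolynomial (Fin n) K)
    (hφ : φ = aeval (fun i => ∑ j, C (A i j) * X j))
    (hl : ∀ k : Fin n, ∀ e : Fin n → ℕ, (∀ j, j < k → e j = 0) → (∃ j, e j ≠ 0) →
      ∏ j, (A j j) ^ e j ≠ 1) :
    Set.range (fun p : MvPolynomial (Fin n) K => p - φ p)
      = (Ideal.span (Set.range (X : Fin n → MvPolynomial (Fin n) K)) :
          Ideal (MvPolynomial (Fin n) K)) := by
  have hconst : ∀ q : MvPolynomial (Fin n) K, constantCoeff (φ q) = constantCoeff q := by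
    intro q
    rw [hφ]
    induction q using MvPolynomial.induction_on with
    | C a => simp
    | add p q hp hq => simp only [map_add, hp, hq]
    | mul_X p i hp => simp [hp]
  set R : Submodule K (MvPolynomial (Fin n) K) :=
    LinearMap.range (LinearMap.id - φ.toLinearMap) with hR_def
  have hmem : ∀ q : MvPolynomial (Fin n) K, q - φ q ∈ R := by
    intro q
    exact ⟨q, by simp⟩
  have hmono : ∀ (N : ℕ) (e : Fin n →₀ ℕ), e ≠ 0 → Aux6.Mw n e ≤ N →
      monomial e (1 : K) ∈ R := by
    intro N
    induction N with
    | zero =>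
      intro e he0 he
      exact absurd he (by have := Aux6.Mw_pos (n := n) he0; omega)
    | succ N ih =>
      intro e he0 he
      set lam : K := ∏ j, A j j ^ e j with hlam_def
      have hlam_ne : lam ≠ 1 := by
        obtain ⟨i, hi⟩ := Finsupp.ne_iff.mp he0
        simp only [Finsupp.coe_zero, Pi.zero_apply] at hi
        exact hl ⟨0, i.pos⟩ (fun j => e j)
          (fun j hj => absurd (Fin.lt_def.mp hj) (Nat.not_lt_zero _)) ⟨i, hi⟩
      have hne : (1 : K) - lam ≠ 0 := sub_ne_zero.mpr (Ne.symm hlam_ne)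
      have hkey := Aux6.key A hA (N + 1) e he
      rw [← hφ] at hkey
      set r : MvPolynomial (Fin n) K := φ (monomial e 1) - C lam * monomial e 1 with hr_def
      have hrR : r ∈ R := by
        refine Aux6.Wsp_le (fun g hg0 hgm => ih g hg0 (by omega)) hkey
      have hsum : (1 - lam) • monomial e (1 : K)
          = (monomial e 1 - φ (monomial e 1)) + r := by
        rw [MvPolynomial.smul_eq_C_mul, map_sub, C_1, hr_def]
        ring
      have heq : monomial e (1 : K)
          = (1 - lam)⁻¹ • ((monomial e 1 - φ (monomial e 1)) + r) := by
        rw [← hsum, inv_smul_smul₀ hne]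
      rw [heq]
      exact Submodule.smul_mem _ _ (add_mem (hmem _) hrR)
  ext p
  simp only [Set.mem_range, SetLike.mem_coe]
  constructor
  · rintro ⟨q, rfl⟩
    rw [← Set.image_univ, mem_ideal_span_X_image]
    intro m hm
    have h0 : coeff 0 (q - φ q) = (0 : K) := by
      have := hconst q
      simp only [MvPolynomial.constantCoeff_eq] at this
      simp [coeff_sub, this]
    rw [mem_support_iff] at hm
    have hm0 : m ≠ 0 := by
      rintro rfl
      exact hm h0
    obtain ⟨i, hi⟩ := Finsupp.ne_iff.mp hm0
    simp only [Finsupp.coe_zero, Pi.zero_apply] at hi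
    exact ⟨i, Set.mem_univ i, hi⟩
  · intro hp
    rw [← Set.image_univ, mem_ideal_span_X_image] at hp
    have hpR : p ∈ R := by
      rw [← support_sum_monomial_coeff p]
      refine Submodule.sum_mem _ (fun m hm => ?_)
      obtain ⟨i, _, hi⟩ := hp m hm
      have hm0 : m ≠ 0 := fun h => hi (by simp [h])
      have hrw : monomial m (coeff m p) = (coeff m p) • monomial m (1 : K) := by
        rw [smul_monomial, smul_eq_mul, mul_one]
      rw [hrw]
      exact Submodule.smul_mem _ _ (hmono (Aux6.Mw n m) m hm0 le_rfl)
    obtain ⟨q, hq⟩ := hpR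
    refine ⟨q, ?_⟩
    simpa [LinearMap.sub_apply] using hq
end

section
/- Let K be a field of characteristic zero and let δ = I − φ be the E-derivation of K[x₁,x₂] where φ(x₁) = λx₁ + x₂ and φ(x₂) = λx₂ with λ ∈ K not a root of unity and λ ≠ 0. Then Im δ equals the maximal ideal (x₁, x₂): every monomial x₁^{i₁} x₂^{i₂} with i₁ + i₂ ≥ 1 lies in Im δ, and 1 ∉ Im δ. -/
open MvPolynomial

lemma key_mem (K : Type*) [Field K] (l : K)
    (hl : ∀ s : ℕ, 0 < s → l ^ s ≠ 1)
    (ψ : MvPolynomial (Fin 2) K →ₐ[K] MvPolynomial (Fin 2) K)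
    (hψ : ψ = aeval ![C l * X 0 + X 1, C l * X 1])
    (S : Submodule K (MvPolynomial (Fin 2) K))
    (hS : ∀ p : MvPolynomial (Fin 2) K, p - ψ p ∈ S) :
    ∀ i j : ℕ, 1 ≤ i + j → (X 0 : MvPolynomial (Fin 2) K) ^ i * X 1 ^ j ∈ S := by
  intro i
  induction i using Nat.strong_induction_on with
  | _ i ih =>
    intro j hij
    have hd : (1 : K) - l ^ (i + j) ≠ 0 := by
      intro h
      exact hl (i + j) hij (sub_eq_zero.mp h).symm
    have eq1 : ψ ((X 0 : MvPolynomial (Fin 2) K) ^ i * X 1 ^ j)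
        = C (l ^ (i + j)) * (X 0 ^ i * X 1 ^ j)
          + ∑ k ∈ Finset.range i,
              C (l ^ (k + j) * (i.choose k : K)) * (X 0 ^ k * X 1 ^ (i - k + j)) := by
      rw [hψ, map_mul, map_pow, map_pow, aeval_X, aeval_X]
      simp only [Matrix.cons_val_zero, Matrix.cons_val_one, Matrix.head_cons]
      rw [add_pow, Finset.sum_range_succ, Nat.choose_self, Nat.sub_self, Nat.cast_one,
        pow_zero, mul_one, mul_one, add_mul, Finset.sum_mul]
      rw [add_comm]
      congr 1
      · rw [mul_pow, mul_pow, ← C_pow, ← C_pow, pow_add l, map_mul C]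
        ring
      · refine Finset.sum_congr rfl fun k hk => ?_
        have hki : k < i := Finset.mem_range.mp hk
        have : i - k + j = (i - k) + j := rfl
        rw [mul_pow, mul_pow, ← C_pow, ← C_pow, map_mul C, pow_add l, map_mul C,
          map_natCast C]
        ring
    have step : ((1 : K) - l ^ (i + j)) • ((X 0 : MvPolynomial (Fin 2) K) ^ i * X 1 ^ j) ∈ S := by
      have heq : ((1 : K) - l ^ (i + j)) • ((X 0 : MvPolynomial (Fin 2) K) ^ i * X 1 ^ j)
          = ((X 0 : MvPolynomial (Fin 2) K) ^ i * X 1 ^ j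
              - ψ (X 0 ^ i * X 1 ^ j))
            + ∑ k ∈ Finset.range i,
                (l ^ (k + j) * (i.choose k : K)) • ((X 0 : MvPolynomial (Fin 2) K) ^ k * X 1 ^ (i - k + j)) := by
        rw [eq1]
        simp only [smul_eq_C_mul, map_sub, map_one]
        ring
      rw [heq]
      refine S.add_mem (hS _) (S.sum_mem fun k hk => S.smul_mem _ ?_)
      have hki : k < i := Finset.mem_range.mp hk
      exact ih k hki (i - k + j) (by omega)
    have := S.smul_mem (((1 : K) - l ^ (i + j))⁻¹) step
    rwa [inv_smul_smul₀ hd] at this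

theorem stmt_7 (K : Type*) [Field K] [CharZero K] (l : K) (hl0 : l ≠ 0)
    (hl : ¬ ∃ s : ℕ, 0 < s ∧ l ^ s = 1)
    (φ : MvPolynomial (Fin 2) K →ₐ[K] MvPolynomial (Fin 2) K)
    (hφ : φ = aeval ![C l * X 0 + X 1, C l * X 1]) :
    Set.range (fun p : MvPolynomial (Fin 2) K => p - φ p)
      = (Ideal.span {(X 0 : MvPolynomial (Fin 2) K), X 1} : Ideal (MvPolynomial (Fin 2) K)) := by
  subst hφ
  push_neg at hl
  have hset : ({(X 0 : MvPolynomial (Fin 2) K), X 1} : Set (MvPolynomial (Fin 2) K))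
      = X '' Set.univ := by
    rw [Set.image_univ]
    ext q
    simp [Fin.exists_fin_two, eq_comm]
  set ψ : MvPolynomial (Fin 2) K →ₐ[K] MvPolynomial (Fin 2) K :=
    aeval ![C l * X 0 + X 1, C l * X 1] with hψ
  have hcc : ∀ q : MvPolynomial (Fin 2) K,
      constantCoeff (ψ q) = constantCoeff q := by
    intro q
    set e : MvPolynomial (Fin 2) K →ₐ[K] K := aeval (fun _ => (0 : K)) with he
    have h1 : e (ψ q) = (aeval (fun i => e ((![C l * X 0 + X 1, C l * X 1]) i)) :
        MvPolynomial (Fin 2) K →ₐ[K] K) q := by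
      rw [hψ]
      exact comp_aeval_apply (f := ![C l * X 0 + X 1, C l * X 1]) e q
    have h2 : (fun i => e ((![C l * X 0 + X 1, C l * X 1]) i)) = (fun _ => (0 : K) : Fin 2 → K) := by
      funext i
      fin_cases i <;> simp [he]
    rw [h2] at h1
    have h3 : ∀ r : MvPolynomial (Fin 2) K, e r = constantCoeff r := by
      intro r
      rw [he]
      simpa using aeval_zero' (S₁ := K) r
    rw [h3, h3] at h1
    exact h1
  ext p
  simp only [Set.mem_range, SetLike.mem_coe]
  constructor
  · rintro ⟨q, rfl⟩
    rw [hset, mem_ideal_span_X_image]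
    intro m hm
    simp only [Set.mem_univ, true_and]
    by_contra h
    push_neg at h
    have hm0 : m = 0 := Finsupp.ext fun i => h i
    rw [hm0, mem_support_iff] at hm
    apply hm
    rw [← constantCoeff_eq, map_sub]
    exact sub_eq_zero.mpr (hcc q).symm
  · intro hp
    set S : Submodule K (MvPolynomial (Fin 2) K) :=
      LinearMap.range (LinearMap.id - ψ.toLinearMap) with hSdef
    have hS : ∀ q : MvPolynomial (Fin 2) K, q - ψ q ∈ S := fun q => ⟨q, rfl⟩
    have key := key_mem K l hl ψ hψ S hS
    have hpS : p ∈ S := by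
      rw [hset, mem_ideal_span_X_image] at hp
      have hsum : (∑ m ∈ p.support, monomial m (coeff m p)) ∈ S := by
        refine S.sum_mem fun m hm => ?_
        have hmono : monomial m (coeff m p)
            = coeff m p • ((X 0 : MvPolynomial (Fin 2) K) ^ m 0 * X 1 ^ m 1) := by
          rw [monomial_eq, smul_eq_C_mul]
          congr 1
          rw [Finsupp.prod_fintype _ _ (fun i => pow_zero _)]
          exact Fin.prod_univ_two _
        rw [hmono]
        refine S.smul_mem _ (key (m 0) (m 1) ?_)
        obtain ⟨i, -, hi⟩ := hp m hm
        rcases (Fin.exists_fin_two (p := fun i => m i ≠ 0)).mp ⟨i, hi⟩ with h0 | h1 <;> omega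
      rwa [← as_sum p] at hsum
    obtain ⟨q, hq⟩ := hpS
    exact ⟨q, hq⟩
end

section
/- Let K be a field of characteristic zero, λ ∈ K a root of unity with λ^s = 1 for least positive integer s, and δ = I − φ the E-derivation of K[x₁,x₂] with φ(x₁) = λx₁ + x₂, φ(x₂) = λx₂. Then x₁^{i₁} x₂^{i₂} ∈ Im δ for all i₁ ≥ 0 and i₂ ≥ 1, and x₁^{i₁} ∈ Im δ whenever s does not divide i₁. -/
open MvPolynomial Finset

theorem stmt_8 (K : Type*) [Field K] [CharZero K] (l : K) (s : ℕ)
    (hs : 0 < s) (hls : l ^ s = 1) (hleast : ∀ t : ℕ, 0 < t → l ^ t = 1 → s ≤ t)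
    (φ : MvPolynomial (Fin 2) K →ₐ[K] MvPolynomial (Fin 2) K)
    (hφ : φ = aeval ![C l * X 0 + X 1, C l * X 1]) :
    (∀ i1 i2 : ℕ, 1 ≤ i2 →
        (X 0 : MvPolynomial (Fin 2) K) ^ i1 * X 1 ^ i2
          ∈ Set.range (fun p : MvPolynomial (Fin 2) K => p - φ p)) ∧
    (∀ i1 : ℕ, ¬ s ∣ i1 →
        (X 0 : MvPolynomial (Fin 2) K) ^ i1
          ∈ Set.range (fun p : MvPolynomial (Fin 2) K => p - φ p)) := by
  classical
  set S : Submodule K (MvPolynomial (Fin 2) K) :=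
    LinearMap.range ((LinearMap.id : MvPolynomial (Fin 2) K →ₗ[K] MvPolynomial (Fin 2) K)
      - φ.toLinearMap) with hS
  have hmemS : ∀ p : MvPolynomial (Fin 2) K, p - φ p ∈ S := fun p => ⟨p, by simp⟩
  have hrange : Set.range (fun p : MvPolynomial (Fin 2) K => p - φ p) = (S : Set _) := by
    ext q
    constructor
    · rintro ⟨p, rfl⟩; exact hmemS p
    · rintro ⟨p, hp⟩; exact ⟨p, by simpa using hp⟩
  have hl0 : l ≠ 0 := by
    intro h
    rw [h, zero_pow hs.ne'] at hls
    exact zero_ne_one hls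
  have hldvd : ∀ t : ℕ, l ^ t = 1 → s ∣ t := by
    intro t ht
    rcases Nat.eq_zero_or_pos t with h0 | hpos
    · simp [h0]
    · have hr := Nat.mod_lt t hs
      have : l ^ (t % s) = 1 := by
        rw [← Nat.mod_add_div t s, pow_add, pow_mul, hls, one_pow, mul_one] at ht
        exact ht
      rcases Nat.eq_zero_or_pos (t % s) with hz | hp
      · exact Nat.dvd_of_mod_eq_zero hz
      · exact absurd (hleast _ hp this) (not_le.mpr hr)
  have hX0 : φ (X 0) = C l * X 0 + X 1 := by rw [hφ]; simp
  have hX1 : φ (X 1) = C l * X 1 := by rw [hφ]; simp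
  -- binomial expansion of φ on monomials
  have hphi : ∀ a b : ℕ, φ (X 0 ^ a * X 1 ^ b)
      = ∑ k ∈ range (a + 1),
          C (l ^ (k + b) * (a.choose k : K)) * (X 0 ^ k * X 1 ^ (a - k + b)) := by
    intro a b
    rw [map_mul, map_pow, map_pow, hX0, hX1, add_pow, mul_pow, ← C_pow, Finset.sum_mul]
    refine Finset.sum_congr rfl fun k hk => ?_
    rw [mem_range, Nat.lt_succ_iff] at hk
    have hsplit : X 1 ^ (a - k + b) = (X 1 : MvPolynomial (Fin 2) K) ^ (a - k) * X 1 ^ b :=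
      pow_add _ _ _
    rw [hsplit, mul_pow]
    have hc : ((a.choose k : ℕ) : MvPolynomial (Fin 2) K) = C ((a.choose k : ℕ) : K) := by
      simp
    rw [hc]
    simp only [map_mul, C_pow, map_pow]
    ring
  -- δ of a monomial, rearranged
  have hdelta : ∀ a b : ℕ,
      (1 - l ^ (a + b)) • ((X 0 : MvPolynomial (Fin 2) K) ^ a * X 1 ^ b)
        = (X 0 ^ a * X 1 ^ b - φ (X 0 ^ a * X 1 ^ b))
          + ∑ k ∈ range a,
              (l ^ (k + b) * (a.choose k : K)) • ((X 0 : MvPolynomial (Fin 2) K) ^ k * X 1 ^ (a - k + b)) := by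
    intro a b
    rw [hphi, Finset.sum_range_succ]
    simp only [Nat.sub_self, Nat.choose_self, Nat.cast_one, mul_one, zero_add,
      smul_eq_C_mul, C_sub, C_1, map_mul, C_pow]
    ring
  -- step for the non-unit-root case
  have step1 : ∀ a b : ℕ, l ^ (a + b) ≠ 1 →
      (∀ k, k < a → (X 0 : MvPolynomial (Fin 2) K) ^ k * X 1 ^ (a - k + b) ∈ S) →
      (X 0 : MvPolynomial (Fin 2) K) ^ a * X 1 ^ b ∈ S := by
    intro a b hne hterms
    have hu : (1 - l ^ (a + b)) ≠ 0 := sub_ne_zero.mpr (Ne.symm hne)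
    have hmem : (1 - l ^ (a + b)) • ((X 0 : MvPolynomial (Fin 2) K) ^ a * X 1 ^ b) ∈ S := by
      rw [hdelta a b]
      refine S.add_mem (hmemS _) (S.sum_mem fun k hk => ?_)
      exact S.smul_mem _ (hterms k (mem_range.mp hk))
    have := S.smul_mem (1 - l ^ (a + b))⁻¹ hmem
    rwa [smul_smul, inv_mul_cancel₀ hu, one_smul] at this
  -- main induction
  have key : ∀ a b : ℕ, 1 ≤ b → (X 0 : MvPolynomial (Fin 2) K) ^ a * X 1 ^ b ∈ S := by
    intro a
    induction a using Nat.strong_induction_on with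
    | _ a IH =>
      intro b hb
      by_cases hcase : l ^ (a + b) = 1
      · -- use δ(X0^(a+1) * X1^(b-1))
        have hab : (a + 1) + (b - 1) = a + b := by omega
        have h0 : (1 : K) - l ^ ((a + 1) + (b - 1)) = 0 := by rw [hab, hcase, sub_self]
        have hd := hdelta (a + 1) (b - 1)
        rw [h0, zero_smul] at hd
        rw [Finset.sum_range_succ] at hd
        have hm : (X 0 : MvPolynomial (Fin 2) K) ^ a * X 1 ^ (a + 1 - a + (b - 1))
            = X 0 ^ a * X 1 ^ b := by
          congr 1
          congr 1
          omega
        rw [hm] at hd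
        set c : K := l ^ (a + (b - 1)) * ((a + 1).choose a : K) with hc
        have hc0 : c ≠ 0 :=
          mul_ne_zero (pow_ne_zero _ hl0)
            (Nat.cast_ne_zero.mpr (Nat.choose_pos (by omega)).ne')
        -- from hd : 0 = δ + ∑_{k<a} ... + c • m
        have hmem : c • ((X 0 : MvPolynomial (Fin 2) K) ^ a * X 1 ^ b) ∈ S := by
          have hd' : ((X 0 ^ (a+1) * X 1 ^ (b-1) - φ (X 0 ^ (a+1) * X 1 ^ (b-1)))
                  + ∑ k ∈ range a,
                      (l ^ (k + (b - 1)) * ((a + 1).choose k : K)) •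
                        ((X 0 : MvPolynomial (Fin 2) K) ^ k * X 1 ^ (a + 1 - k + (b - 1))))
              + c • ((X 0 : MvPolynomial (Fin 2) K) ^ a * X 1 ^ b) = 0 := by
            rw [← add_assoc] at hd
            exact hd.symm
          rw [eq_neg_of_add_eq_zero_right hd']
          refine S.neg_mem (S.add_mem (hmemS _) (S.sum_mem fun k hk => ?_))
          refine S.smul_mem _ ?_
          have hk' := mem_range.mp hk
          have hexp : 1 ≤ a + 1 - k + (b - 1) := by omega
          exact IH k (by omega) (a + 1 - k + (b - 1)) hexp
        have := S.smul_mem c⁻¹ hmem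
        rwa [smul_smul, inv_mul_cancel₀ hc0, one_smul] at this
      · refine step1 a b hcase fun k hk => ?_
        have hexp : 1 ≤ a - k + b := by omega
        exact IH k hk _ hexp
  constructor
  · intro i1 i2 hi2
    rw [hrange]
    exact key i1 i2 hi2
  · intro i1 hi1
    rw [hrange]
    have h1 : l ^ (i1 + 0) ≠ 1 := by
      rw [Nat.add_zero]
      exact fun h => hi1 (hldvd _ h)
    have : (X 0 : MvPolynomial (Fin 2) K) ^ i1 * X 1 ^ 0 ∈ S := by
      refine step1 i1 0 h1 fun k hk => ?_
      exact key k (i1 - k + 0) (by omega)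
    simpa using this
end

section
/- Let K be a field of characteristic zero, λ ∈ K a root of unity with least period s, and δ = I − φ the E-derivation of K[x₁,x₂] with φ(x₁) = λx₁ + x₂, φ(x₂) = λx₂. Then x₁^{ds} ∉ Im δ for every natural number d (including d = 0), and the radical r(Im δ) equals the ideal generated by x₂. -/
open MvPolynomial

namespace Stmt9Aux
variable {K : Type*} [Field K]
variable {K : Type*} [Field K]

noncomputable def Phi (l : K) : MvPolynomial (Fin 2) K →ₐ[K] MvPolynomial (Fin 2) K :=
  aeval ![C l * X 0 + X 1, C l * X 1]

noncomputable def prj : MvPolynomial (Fin 2) K →ₐ[K] Polynomial K :=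
  aeval ![Polynomial.X, 0]

noncomputable def scl (l : K) : Polynomial K →ₐ[K] Polynomial K :=
  Polynomial.aeval (Polynomial.C l * Polynomial.X)

lemma comm (l : K) : prj.comp (Phi l) = (scl l).comp (prj (K := K)) := by
  apply MvPolynomial.algHom_ext
  intro i
  fin_cases i <;>
    simp [Phi, prj, scl, Matrix.cons_val_zero, Matrix.cons_val_one]

lemma scl_coeff (l : K) (q : Polynomial K) (n : ℕ) :
    (scl l q).coeff n = l ^ n * q.coeff n := by
  induction q using Polynomial.induction_on' with
  | add p q hp hq => simp [map_add, hp, hq, mul_add]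
  | monomial k c =>
    have h1 : scl l (Polynomial.monomial k c)
        = Polynomial.C (c * l ^ k) * Polynomial.X ^ k := by
      simp only [scl, Polynomial.aeval_monomial, mul_pow, Polynomial.algebraMap_eq,
        ← Polynomial.C_pow, Polynomial.C_mul, mul_assoc]
    rw [h1, Polynomial.coeff_C_mul, Polynomial.coeff_X_pow, Polynomial.coeff_monomial]
    by_cases h : k = n
    · subst h; simp [mul_comm]
    · simp [h, Ne.symm h]

lemma monomial_decomp (u : Fin 2 →₀ ℕ) (c : K) :
    monomial u c = C c * X 0 ^ (u 0) * X 1 ^ (u 1) := by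
  have hu : u = Finsupp.single 0 (u 0) + Finsupp.single 1 (u 1) := by
    ext i; fin_cases i <;> simp [Finsupp.single_apply]
  rw [X_pow_eq_monomial, X_pow_eq_monomial, C_mul_monomial, monomial_mul, hu]
  simp

lemma coeff_prj (p : MvPolynomial (Fin 2) K) (n : ℕ) :
    coeff (Finsupp.single 0 n) p = (prj p).coeff n := by
  induction p using MvPolynomial.induction_on' with
  | add p q hp hq => simp [map_add, coeff_add, hp, hq]
  | monomial u c =>
    rw [coeff_monomial, monomial_decomp]
    simp only [map_mul, map_pow, prj, aeval_X, aeval_C]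
    simp only [Matrix.cons_val_zero, Matrix.cons_val_one, Matrix.head_cons]
    rcases Nat.eq_zero_or_pos (u 1) with h1 | h1
    · rw [h1]
      simp only [pow_zero, mul_one]
      rw [Polynomial.algebraMap_eq, Polynomial.coeff_C_mul, Polynomial.coeff_X_pow]
      have hiff : (u = Finsupp.single (0 : Fin 2) n) ↔ u 0 = n := by
        constructor
        · intro h; rw [h]; simp
        · intro h
          ext i; fin_cases i <;> simp [Finsupp.single_apply, h, h1]
      split_ifs with h2 h3 h3
      · ring
      · exact absurd (hiff.mp h2) (fun hh => h3 hh.symm)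
      · exact absurd (hiff.mpr h3.symm) h2
      · ring
    · rw [zero_pow h1.ne']
      have hne : u ≠ Finsupp.single (0 : Fin 2) n := by
        intro h
        have h2 := DFunLike.congr_fun h (1 : Fin 2)
        simp [Finsupp.single_apply] at h2
        omega
      simp [hne]


noncomputable def M (l : K) : Submodule K (MvPolynomial (Fin 2) K) :=
  LinearMap.range ((LinearMap.id : _ →ₗ[K] _) - (Phi l).toLinearMap)

lemma mem_M_iff {l : K} {x : MvPolynomial (Fin 2) K} :
    x ∈ M l ↔ ∃ p, p - Phi l p = x := by
  simp [M, LinearMap.mem_range, LinearMap.sub_apply]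

lemma phi_expand (l : K) (n k : ℕ) (hk : k ≤ n) :
    Phi l (X 0 ^ k * X 1 ^ (n - k)) =
      ∑ j ∈ Finset.range (k + 1),
        C ((k.choose j : K) * l ^ (n - k + j)) * (X 0 ^ j * X 1 ^ (n - j)) := by
  rw [Phi]
  rw [map_mul, map_pow, map_pow, aeval_X, aeval_X]
  simp only [Matrix.cons_val_zero, Matrix.cons_val_one, Matrix.head_cons]
  rw [add_pow, Finset.sum_mul]
  apply Finset.sum_congr rfl
  intro j hj
  have hj' : j ≤ k := Nat.lt_succ_iff.mp (Finset.mem_range.mp hj)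
  rw [mul_pow, mul_pow]
  rw [show n - j = (k - j) + (n - k) by omega]
  rw [show n - k + j = (n - k) + j from rfl]
  rw [pow_add, pow_add]
  rw [← map_natCast (C : K →+* MvPolynomial (Fin 2) K) (k.choose j)]
  simp only [C_mul, C_pow]
  ring

lemma cancelC {l c : K} {x : MvPolynomial (Fin 2) K} (hc : c ≠ 0)
    (h : C c * x ∈ M l) : x ∈ M l := by
  have h2 := Submodule.smul_mem (M l) c⁻¹ h
  rwa [smul_eq_C_mul, ← mul_assoc, ← C_mul, inv_mul_cancel₀ hc, C_1, one_mul] at h2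

lemma e_mem_A (l : K) (n : ℕ) (h1 : l ^ n ≠ 1) :
    ∀ k, k ≤ n → X 0 ^ k * X 1 ^ (n - k) ∈ M l := by
  intro k
  induction k using Nat.strong_induction_on with
  | _ k ih =>
    intro hk
    have hid : C (1 - l ^ n) * (X 0 ^ k * X 1 ^ (n - k))
        = (X 0 ^ k * X 1 ^ (n - k) - Phi l (X 0 ^ k * X 1 ^ (n - k)))
          + ∑ j ∈ Finset.range k,
              C ((k.choose j : K) * l ^ (n - k + j)) * (X 0 ^ j * X 1 ^ (n - j)) := by
      rw [phi_expand l n k hk, Finset.sum_range_succ]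
      have hc : ((k.choose k : K) * l ^ (n - k + k)) = l ^ n := by
        rw [Nat.choose_self, Nat.sub_add_cancel hk]; simp
      rw [hc, map_sub, C_1]
      ring
    apply cancelC (sub_ne_zero_of_ne (Ne.symm h1))
    rw [hid]
    apply Submodule.add_mem
    · exact mem_M_iff.mpr ⟨_, rfl⟩
    · apply Submodule.sum_mem
      intro j hj
      have hjk : j < k := Finset.mem_range.mp hj
      rw [← smul_eq_C_mul]
      exact Submodule.smul_mem _ _ (ih j hjk (le_trans hjk.le hk))

lemma e_mem_B [CharZero K] (l : K) (n : ℕ) (hl0 : l ≠ 0) (h1 : l ^ n = 1) :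
    ∀ k, k < n → X 0 ^ k * X 1 ^ (n - k) ∈ M l := by
  intro k
  induction k using Nat.strong_induction_on with
  | _ k ih =>
    intro hk
    have hk1 : k + 1 ≤ n := hk
    have hid : C (((k+1).choose k : K) * l ^ (n - (k+1) + k)) * (X 0 ^ k * X 1 ^ (n - k))
        = -(X 0 ^ (k+1) * X 1 ^ (n - (k+1)) - Phi l (X 0 ^ (k+1) * X 1 ^ (n - (k+1))))
          - ∑ j ∈ Finset.range k,
              C (((k+1).choose j : K) * l ^ (n - (k+1) + j)) * (X 0 ^ j * X 1 ^ (n - j)) := by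
      rw [phi_expand l n (k+1) hk1, Finset.sum_range_succ, Finset.sum_range_succ]
      have hc : (((k+1).choose (k+1) : K) * l ^ (n - (k+1) + (k+1))) = 1 := by
        rw [Nat.choose_self, Nat.sub_add_cancel hk1, h1]; simp
      rw [hc, C_1]
      ring
    have hcne : (((k+1).choose k : K) * l ^ (n - (k+1) + k)) ≠ 0 := by
      apply mul_ne_zero
      · rw [Nat.choose_succ_self_right]
        exact Nat.cast_ne_zero.mpr (Nat.succ_ne_zero k)
      · exact pow_ne_zero _ hl0
    apply cancelC hcne
    rw [hid]
    apply Submodule.sub_mem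
    · exact Submodule.neg_mem _ (mem_M_iff.mpr ⟨_, rfl⟩)
    · apply Submodule.sum_mem
      intro j hj
      have hjk : j < k := Finset.mem_range.mp hj
      rw [← smul_eq_C_mul]
      exact Submodule.smul_mem _ _ (ih j hjk (lt_trans hjk hk))

lemma e_mem [CharZero K] (l : K) (hl0 : l ≠ 0) (n k : ℕ) (hk : k < n) :
    X 0 ^ k * X 1 ^ (n - k) ∈ M l := by
  by_cases h1 : l ^ n = 1
  · exact e_mem_B l n hl0 h1 k hk
  · exact e_mem_A l n h1 k hk.le


noncomputable def rho : Polynomial K →ₐ[K] MvPolynomial (Fin 2) K :=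
  Polynomial.aeval (X 0)

lemma coeff_phi (l : K) (p : MvPolynomial (Fin 2) K) (n : ℕ) :
    coeff (Finsupp.single 0 n) (Phi l p) = l ^ n * coeff (Finsupp.single 0 n) p := by
  rw [coeff_prj, coeff_prj]
  have h := congrArg (fun g : MvPolynomial (Fin 2) K →ₐ[K] Polynomial K => g p) (comm l)
  simp only [AlgHom.comp_apply] at h
  rw [show prj (Phi l p) = scl l (prj p) from h, scl_coeff]

lemma prj_mul_X1 (h : MvPolynomial (Fin 2) K) : prj (X 1 * h) = 0 := by
  rw [map_mul]
  have : prj (X 1 : MvPolynomial (Fin 2) K) = 0 := by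
    simp [prj]
  rw [this, zero_mul]

lemma sub_rho_prj_mem (f : MvPolynomial (Fin 2) K) :
    f - rho (prj f) ∈ Ideal.span {(X 1 : MvPolynomial (Fin 2) K)} := by
  induction f using MvPolynomial.induction_on' with
  | add p q hp hq =>
    have : p + q - rho (prj (p + q)) = (p - rho (prj p)) + (q - rho (prj q)) := by
      rw [map_add, map_add]; ring
    rw [this]
    exact Ideal.add_mem _ hp hq
  | monomial u c =>
    rw [monomial_decomp]
    have hprj : prj (C c * X 0 ^ (u 0) * X 1 ^ (u 1) : MvPolynomial (Fin 2) K)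
        = Polynomial.C c * Polynomial.X ^ (u 0) * 0 ^ (u 1) := by
      simp [prj, Polynomial.algebraMap_eq]
    rcases Nat.eq_zero_or_pos (u 1) with h1 | h1
    · rw [hprj, h1]
      have : rho (Polynomial.C c * Polynomial.X ^ (u 0) * (0:Polynomial K) ^ 0)
          = C c * X 0 ^ (u 0) * X 1 ^ (0:ℕ) := by
        simp [rho, Polynomial.algebraMap_eq]
      rw [this]
      simp [Ideal.zero_mem]
    · rw [hprj, zero_pow h1.ne', mul_zero, show rho (0 : Polynomial K) = 0 from map_zero _,
        sub_zero]
      rw [Ideal.mem_span_singleton]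
      exact ⟨C c * X 0 ^ (u 0) * X 1 ^ (u 1 - 1), by
        nth_rewrite 1 [show u 1 = (u 1 - 1) + 1 by omega]
        rw [pow_succ]; ring⟩

lemma mem_span_of_prj_zero {f : MvPolynomial (Fin 2) K} (h : prj f = 0) :
    f ∈ Ideal.span {(X 1 : MvPolynomial (Fin 2) K)} := by
  have := sub_rho_prj_mem f
  rwa [h, map_zero, sub_zero] at this

lemma X1_mul_mem [CharZero K] (l : K) (hl0 : l ≠ 0) (h : MvPolynomial (Fin 2) K) :
    X 1 * h ∈ M l := by
  induction h using MvPolynomial.induction_on' with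
  | add p q hp hq => rw [mul_add]; exact Submodule.add_mem _ hp hq
  | monomial u c =>
    have hid : X 1 * monomial u c
        = C c * (X 0 ^ (u 0) * X 1 ^ ((u 0 + u 1 + 1) - u 0)) := by
      rw [monomial_decomp, show (u 0 + u 1 + 1) - u 0 = u 1 + 1 by omega, pow_succ]
      ring
    rw [hid, ← smul_eq_C_mul]
    exact Submodule.smul_mem _ _ (e_mem l hl0 (u 0 + u 1 + 1) (u 0) (by omega))

end Stmt9Aux

open Stmt9Aux

theorem stmt_9 (K : Type*) [Field K] [CharZero K] (l : K) (s : ℕ)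
    (hs : 0 < s) (hls : l ^ s = 1) (hleast : ∀ t : ℕ, 0 < t → l ^ t = 1 → s ≤ t)
    (φ : MvPolynomial (Fin 2) K →ₐ[K] MvPolynomial (Fin 2) K)
    (hφ : φ = aeval ![C l * X 0 + X 1, C l * X 1]) :
    (∀ d : ℕ, (X 0 : MvPolynomial (Fin 2) K) ^ (d * s)
        ∉ Set.range (fun p : MvPolynomial (Fin 2) K => p - φ p)) ∧
    {f : MvPolynomial (Fin 2) K | ∃ N : ℕ, ∀ m : ℕ, N ≤ m →
        f ^ m ∈ Set.range (fun p : MvPolynomial (Fin 2) K => p - φ p)}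
      = (Ideal.span {(X 1 : MvPolynomial (Fin 2) K)} : Ideal (MvPolynomial (Fin 2) K)) := by
  subst hφ
  have hl0 : l ≠ 0 := by
    intro h
    rw [h, zero_pow hs.ne'] at hls
    exact zero_ne_one hls
  constructor
  · rintro d ⟨p, hp⟩
    simp only at hp
    have hc := congrArg (coeff (Finsupp.single 0 (d * s))) hp
    rw [coeff_sub, show (aeval ![C l * X 0 + X 1, C l * X 1]) p = Phi l p from rfl,
      coeff_phi] at hc
    have hln : l ^ (d * s) = 1 := by rw [mul_comm, pow_mul, hls, one_pow]
    rw [hln, one_mul, sub_self] at hc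
    rw [coeff_X_pow] at hc
    simp at hc
  · ext f
    simp only [Set.mem_setOf_eq, SetLike.mem_coe]
    constructor
    · rintro ⟨N, hN⟩
      apply mem_span_of_prj_zero
      by_contra hg
      set g := prj f with hgdef
      set e := g.natDegree with hedef
      set m := (N + 1) * s with hm
      have hms : N ≤ m := by
        calc N ≤ (N + 1) * 1 := by omega
        _ ≤ (N + 1) * s := Nat.mul_le_mul_left _ hs
        _ = m := hm.symm
      obtain ⟨p, hp⟩ := hN m hms
      simp only at hp
      have hc := congrArg (coeff (Finsupp.single 0 (m * e))) hp
      rw [coeff_sub, show (aeval ![C l * X 0 + X 1, C l * X 1]) p = Phi l p from rfl,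
        coeff_phi] at hc
      have hln : l ^ (m * e) = 1 := by
        rw [show m * e = s * ((N + 1) * e) by rw [hm]; ring, pow_mul, hls, one_pow]
      rw [hln, one_mul, sub_self] at hc
      rw [coeff_prj, map_pow] at hc
      have hdeg : (g ^ m).natDegree = m * e := Polynomial.natDegree_pow g m
      have hlead : (g ^ m).coeff (m * e) = g.leadingCoeff ^ m := by
        rw [← Polynomial.leadingCoeff_pow, Polynomial.leadingCoeff, hdeg]
      rw [hlead] at hc
      exact pow_ne_zero m (Polynomial.leadingCoeff_ne_zero.mpr hg) hc.symm
    · intro hf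
      obtain ⟨g, hg⟩ := Ideal.mem_span_singleton.mp hf
      refine ⟨1, fun m hm => ?_⟩
      have hfm : f ^ m = X 1 * (g * f ^ (m - 1)) := by
        nth_rewrite 1 [show m = 1 + (m - 1) by omega]
        rw [pow_add, pow_one, hg]; ring
      rw [hfm]
      obtain ⟨p, hp⟩ := mem_M_iff.mp (X1_mul_mem l hl0 (g * f ^ (m - 1)))
      exact ⟨p, hp⟩
end

section
/- Let K be a field of characteristic zero and δ = I − φ the E-derivation of K[x₁,x₂] with φ(x₁) = x₁ + x₂ + μ and φ(x₂) = x₂, where μ ∈ K. Then Im δ is the principal ideal generated by x₂ + μ. In particular (x₂ + μ)·x₁^{i₁} x₂^{i₂} ∈ Im δ for all i₁, i₂ ≥ 0 and 1 ∉ Im δ. -/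
open MvPolynomial Finset

theorem stmt_10 (K : Type*) [Field K] [CharZero K] (μ : K)
    (φ : MvPolynomial (Fin 2) K →ₐ[K] MvPolynomial (Fin 2) K)
    (hφ : φ = aeval ![X 0 + X 1 + C μ, X 1]) :
    Set.range (fun p : MvPolynomial (Fin 2) K => p - φ p)
      = (Ideal.span {(X 1 : MvPolynomial (Fin 2) K) + C μ} : Ideal (MvPolynomial (Fin 2) K)) := by
  set t : MvPolynomial (Fin 2) K := X 1 + C μ with ht
  have hφ0 : φ (X 0) = X 0 + t := by rw [hφ]; simp [ht, add_assoc]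
  have hφ1 : φ (X 1) = X 1 := by rw [hφ]; simp
  have hφC : ∀ a : K, φ (C a) = C a := by intro a; rw [hφ]; simp [algebraMap_eq]
  have hφt : φ t = t := by rw [ht, map_add, hφ1, hφC]
  -- forward inclusion
  have fwd : ∀ p : MvPolynomial (Fin 2) K, p - φ p ∈ Ideal.span {t} := by
    intro p
    induction p using MvPolynomial.induction_on with
    | C a => simp [hφC]
    | add p q hp hq => have := Ideal.add_mem _ hp hq; simpa [sub_add_sub_comm] using this
    | mul_X p n hp =>
        have : p * X n - φ (p * X n) = (p - φ p) * X n + φ p * (X n - φ (X n)) := by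
          rw [map_mul]; ring
        rw [this]
        apply Ideal.add_mem
        · exact Ideal.mul_mem_right _ _ hp
        · apply Ideal.mul_mem_left
          fin_cases n
          · show X 0 - φ (X 0) ∈ Ideal.span {t}
            rw [hφ0]
            have : (X 0 : MvPolynomial (Fin 2) K) - (X 0 + t) = -t := by ring
            rw [this]
            exact neg_mem (Ideal.subset_span rfl)
          · show X 1 - φ (X 1) ∈ Ideal.span {t}
            simp [hφ1]
  -- the range as a submodule
  set S : Submodule K (MvPolynomial (Fin 2) K) :=
    LinearMap.range ((LinearMap.id : MvPolynomial (Fin 2) K →ₗ[K] MvPolynomial (Fin 2) K)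
      - φ.toLinearMap) with hS
  have hmem : ∀ p : MvPolynomial (Fin 2) K, p - φ p ∈ S := fun p => ⟨p, rfl⟩
  have key : ∀ i : ℕ, ∀ q : MvPolynomial (Fin 2) K, φ q = q → t * X 0 ^ i * q ∈ S := by
    intro i
    induction i using Nat.strong_induction_on with
    | _ i IH =>
      intro q hq
      have hδ : X 0 ^ (i+1) * q - φ (X 0 ^ (i+1) * q) ∈ S := hmem _
      rw [map_mul, map_pow, hφ0, hq] at hδ
      have expand : X 0 ^ (i+1) * q - (X 0 + t) ^ (i+1) * q
          = - ∑ k ∈ range (i+1), X 0 ^ k * t ^ (i+1-k) * ((i+1).choose k : MvPolynomial (Fin 2) K) * q := by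
        rw [add_pow, sum_range_succ]
        simp only [Nat.sub_self, pow_zero, Nat.choose_self, Nat.cast_one, mul_one]
        rw [add_mul, Finset.sum_mul]
        ring
      rw [expand] at hδ
      have hδ' : ∑ k ∈ range (i+1), X 0 ^ k * t ^ (i+1-k) * ((i+1).choose k : MvPolynomial (Fin 2) K) * q ∈ S := by
        have := S.neg_mem hδ; simpa using this
      rw [sum_range_succ] at hδ'
      have htop : (↑(i+1) : K) • (t * X 0 ^ i * q)
          = X 0 ^ i * t ^ (i+1-i) * ((i+1).choose i : MvPolynomial (Fin 2) K) * q := by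
        have h1 : i + 1 - i = 1 := by omega
        rw [h1, Nat.choose_succ_self_right]
        rw [← MvPolynomial.C_eq_coe_nat, smul_eq_C_mul]
        push_cast
        ring
      have hlower : ∑ k ∈ range i, X 0 ^ k * t ^ (i+1-k) * ((i+1).choose k : MvPolynomial (Fin 2) K) * q ∈ S := by
        apply Submodule.sum_mem
        intro k hk
        have hk' : k < i := mem_range.mp hk
        have : X 0 ^ k * t ^ (i+1-k) * ((i+1).choose k : MvPolynomial (Fin 2) K) * q
            = ((i+1).choose k : K) • (t * X 0 ^ k * (t ^ (i-k) * q)) := by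
          rw [← MvPolynomial.C_eq_coe_nat, smul_eq_C_mul]
          have h2 : i + 1 - k = (i - k) + 1 := by omega
          rw [h2, pow_succ]
          ring
        rw [this]
        apply S.smul_mem
        exact IH k hk' _ (by rw [map_mul, map_pow, hφt, hq])
      have hfinal : (↑(i+1) : K) • (t * X 0 ^ i * q) ∈ S := by
        rw [htop]
        have := S.sub_mem hδ' hlower
        simpa using this
      have hne : ((i+1 : ℕ) : K) ≠ 0 := by exact_mod_cast Nat.succ_ne_zero i
      have := S.smul_mem (((i+1:ℕ) : K))⁻¹ hfinal
      rwa [inv_smul_smul₀ hne] at this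
  -- t * g ∈ S for every g
  have tg : ∀ g : MvPolynomial (Fin 2) K, t * g ∈ S := by
    intro g
    induction g using MvPolynomial.induction_on' with
    | monomial s a =>
        have hmono : (monomial s) a = a • (X 0 ^ s 0 * X 1 ^ s 1) := by
          rw [monomial_eq, Finsupp.prod_pow, Fin.prod_univ_two, smul_eq_C_mul]
        rw [hmono, mul_smul_comm]
        apply S.smul_mem
        have : t * (X 0 ^ s 0 * X 1 ^ s 1) = t * X 0 ^ s 0 * X 1 ^ s 1 := by ring
        rw [this]
        exact key (s 0) _ (by rw [map_pow, hφ1])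
    | add p q hp hq =>
        rw [mul_add]
        exact S.add_mem hp hq
  -- conclude
  ext x
  constructor
  · rintro ⟨p, rfl⟩
    exact fwd p
  · intro hx
    rw [SetLike.mem_coe, Ideal.mem_span_singleton'] at hx
    obtain ⟨g, rfl⟩ := hx
    have : g * t = t * g := by ring
    rw [this]
    obtain ⟨p, hp⟩ := tg g
    exact ⟨p, by simpa [LinearMap.sub_apply] using hp⟩
end

section
/- Let K be a field of characteristic zero, a₁,...,aₙ ∈ K with no nonzero integer solution of Σ aᵢyᵢ = 0, and let D = Σᵢ (aᵢxᵢ + bᵢ(x₁,...,x_{i-1})) ∂ᵢ be a derivation of K[x₁,...,xₙ] with bᵢ ∈ K[x₁,...,x_{i-1}]. Then there exists a polynomial automorphism σ of K[x₁,...,xₙ] such that σ⁻¹ ∘ D ∘ σ = Σᵢ aᵢ xᵢ ∂ᵢ, and consequently Im D is an ideal of K[x₁,...,xₙ]. -/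
set_option maxHeartbeats 1000000

open MvPolynomial

section Aux
variable {K : Type*} [Field K] {n : ℕ}
local notation "P" => MvPolynomial (Fin n) K

lemma aux_aeval_congr (u v : Fin n → P) (s : Set (Fin n)) {p : P}
    (hp : p ∈ supported K s) (h : ∀ j ∈ s, u j = v j) : aeval u p = aeval v p := by
  rw [supported_eq_adjoin_X] at hp
  induction hp using Algebra.adjoin_induction with
  | mem x hx => obtain ⟨j, hj, rfl⟩ := hx; simp [h j hj]
  | algebraMap r => simp
  | add x y _ _ hx hy => simp only [map_add, hx, hy]
  | mul x y _ _ hx hy => simp only [map_mul, hx, hy]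

lemma aux_aeval_self (u : Fin n → P) (s : Set (Fin n)) {p : P}
    (hp : p ∈ supported K s) (h : ∀ j ∈ s, u j = X j) : aeval u p = p := by
  rw [aux_aeval_congr u X s hp h, aeval_X_left_apply]



lemma aux_eig_pow (D : Derivation K P P) (f : P) (c : K) (hf : D f = c • f) (e : ℕ) :
    D (f ^ e) = ((e : K) * c) • f ^ e := by
  induction e with
  | zero => simp
  | succ m ih =>
    rw [pow_succ, Derivation.leibniz, ih, hf]
    simp only [smul_eq_mul, smul_eq_C_mul, Nat.cast_add, Nat.cast_one, map_add, map_mul, map_one]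
    ring

lemma aux_eig_prod (D : Derivation K P P) (f : Fin n → P) (a : Fin n → K)
    (t : Finset (Fin n)) (e : Fin n → ℕ)
    (hf : ∀ j ∈ t, e j ≠ 0 → D (f j) = a j • f j) :
    D (∏ j ∈ t, f j ^ e j) = (∑ j ∈ t, (e j : K) * a j) • ∏ j ∈ t, f j ^ e j := by
  induction t using Finset.induction with
  | empty => simp
  | insert _ _ hj ih =>
    rename_i j t
    rw [Finset.prod_insert hj, Finset.sum_insert hj, Derivation.leibniz,
      ih (fun k hk hek => hf k (Finset.mem_insert_of_mem hk) hek)]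
    have hDj : D (f j ^ e j) = ((e j : K) * a j) • f j ^ e j := by
      by_cases he : e j = 0
      · simp [he]
      · exact aux_eig_pow D (f j) (a j) (hf j (Finset.mem_insert_self j t) he) (e j)
    rw [hDj]
    simp only [smul_eq_mul, smul_eq_C_mul, map_add, map_mul]
    ring



lemma aux_eig_monomial (D : Derivation K P P) (f : Fin n → P) (a : Fin n → K)
    (s : Fin n →₀ ℕ) (r : K) (hf : ∀ j, s j ≠ 0 → D (f j) = a j • f j) :
    D (aeval f (monomial s r)) = (∑ j, (s j : K) * a j) • aeval f (monomial s r) := by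
  rw [aeval_monomial, Finsupp.prod_fintype _ _ (fun i => pow_zero (f i))]
  rw [Derivation.leibniz, Derivation.map_algebraMap, smul_zero, add_zero,
    aux_eig_prod D f a Finset.univ (fun j => s j) (fun j _ h => hf j h)]
  rw [smul_comm]
  rfl



lemma aux_D0_monomial (a : Fin n → K) (s : Fin n →₀ ℕ) (r : K) :
    mkDerivation K (fun i : Fin n => (C (a i) * X i : P)) (monomial s r)
      = (∑ j, (s j : K) * a j) • monomial s r := by
  rw [mkDerivation_monomial, Finsupp.sum]
  have hterm : ∀ i ∈ s.support,
      (monomial (s - Finsupp.single i 1) ((s i : K))) • ((C (a i) * X i : P))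
        = monomial s ((s i : K) * a i) := by
    intro i hi
    have hle : Finsupp.single i 1 ≤ s := by
      rw [Finsupp.single_le_iff, Nat.succ_le_iff, pos_iff_ne_zero]
      exact Finsupp.mem_support_iff.mp hi
    rw [smul_eq_mul, mul_comm, mul_assoc, X, monomial_mul, one_mul,
      add_comm, tsub_add_cancel_of_le hle, C_mul_monomial, mul_comm (a i)]
  rw [Finset.sum_congr rfl hterm, ← Finset.sum_subset (Finset.subset_univ s.support)
    (by intro x _ hx; rw [Finsupp.notMem_support_iff] at hx; simp [hx])]
  rw [← map_sum (monomial s), smul_monomial, smul_monomial, smul_eq_mul, smul_eq_mul, mul_comm]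



lemma aux_X_mem_adjoin (f : Fin n → P)
    (hf : ∀ j : Fin n, f j - X j ∈ supported K {k : Fin n | (k : ℕ) < (j : ℕ)}) (m : ℕ) :
    ∀ j : Fin n, (j : ℕ) < m →
      X j ∈ Algebra.adjoin K (f '' {k : Fin n | (k : ℕ) < m}) := by
  set A := Algebra.adjoin K (f '' {k : Fin n | (k : ℕ) < m})
  have claim : ∀ v : ℕ, ∀ j : Fin n, (j : ℕ) ≤ v → (j : ℕ) < m → X j ∈ A := by
    intro v
    induction v using Nat.strong_induction_on with
    | _ v IH =>
      intro j hjv hjm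
      have h1 : f j ∈ A := Algebra.subset_adjoin ⟨j, hjm, rfl⟩
      have h2 : f j - X j ∈ A := by
        refine Algebra.adjoin_le ?_ (by rw [← supported_eq_adjoin_X]; exact hf j)
        rintro _ ⟨k, hk, rfl⟩
        exact IH (k : ℕ) (lt_of_lt_of_le hk hjv) k le_rfl (lt_trans hk hjm)
      simpa using sub_mem h1 h2
  exact fun j hj => claim (j : ℕ) j le_rfl hj

lemma aux_adjoin_f_eq (f : Fin n → P) (s : Set (Fin n)) :
    Algebra.adjoin K (f '' s) = (supported K s).map (aeval f : P →ₐ[K] P) := by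
  rw [supported_eq_adjoin_X, ← Algebra.adjoin_image]
  congr 1
  rw [Set.image_image]
  exact Set.image_congr fun j _ => (aeval_X f j).symm

lemma aux_supported_le_map (f : Fin n → P)
    (hf : ∀ j : Fin n, f j - X j ∈ supported K {k : Fin n | (k : ℕ) < (j : ℕ)}) (m : ℕ) :
    supported K {j : Fin n | (j : ℕ) < m}
      ≤ (supported K {j : Fin n | (j : ℕ) < m}).map (aeval f : P →ₐ[K] P) := by
  rw [← aux_adjoin_f_eq, supported_eq_adjoin_X]
  refine Algebra.adjoin_le ?_
  rintro _ ⟨j, hj, rfl⟩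
  exact aux_X_mem_adjoin f hf m j hj

lemma aux_map_le_supported (f : Fin n → P)
    (hf : ∀ j : Fin n, f j - X j ∈ supported K {k : Fin n | (k : ℕ) < (j : ℕ)}) (m : ℕ) :
    (supported K {j : Fin n | (j : ℕ) < m}).map (aeval f : P →ₐ[K] P)
      ≤ supported K {j : Fin n | (j : ℕ) < m} := by
  intro p hp
  obtain ⟨q, hq, rfl⟩ := Subalgebra.mem_map.mp hp
  clear hp
  rw [supported_eq_adjoin_X] at hq
  induction hq using Algebra.adjoin_induction with
  | mem x hx =>
    obtain ⟨j, hj, rfl⟩ := hx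
    rw [aeval_X]
    have hj' : (j : ℕ) < m := hj
    have h1 : (X j : P) ∈ supported K {k : Fin n | (k : ℕ) < m} :=
      X_mem_supported.mpr hj'
    have hsub : {k : Fin n | (k : ℕ) < (j : ℕ)} ⊆ {k : Fin n | (k : ℕ) < m} :=
      fun k hk => lt_trans hk hj'
    have h2 : f j - X j ∈ supported K {k : Fin n | (k : ℕ) < m} :=
      supported_mono hsub (hf j)
    simpa using add_mem h2 h1
  | algebraMap r => simpa using Subalgebra.algebraMap_mem (supported K {j : Fin n | (j : ℕ) < m}) r
  | add x y _ _ hx hy => rw [map_add]; exact add_mem hx hy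
  | mul x y _ _ hx hy => rw [map_mul]; exact mul_mem hx hy



lemma aux_c_ne (a : Fin n → K)
    (ha : ∀ y : Fin n → ℤ, (∃ i, y i ≠ 0) → ∑ i, (y i : K) * a i ≠ 0)
    (s : Fin n →₀ ℕ) (hs : s ≠ 0) : (∑ j, (s j : K) * a j) ≠ 0 := by
  have hex : ∃ j, (s j : ℤ) ≠ 0 := by
    obtain ⟨j, hj⟩ := Finsupp.ne_iff.mp hs
    exact ⟨j, by exact_mod_cast hj⟩
  have := ha (fun j => (s j : ℤ)) hex
  simpa using this

lemma aux_c_ne_a (a : Fin n → K)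
    (ha : ∀ y : Fin n → ℤ, (∃ i, y i ≠ 0) → ∑ i, (y i : K) * a i ≠ 0)
    (i : Fin n) (s : Fin n →₀ ℕ) (hsi : s i = 0) :
    (∑ j, (s j : K) * a j) - a i ≠ 0 := by
  have := ha (fun j => if j = i then -1 else (s j : ℤ)) ⟨i, by simp⟩
  have heq : (∑ j, (Int.cast (if j = i then (-1 : ℤ) else (s j : ℤ)) : K) * a j)
      = (∑ j, (s j : K) * a j) - a i := by
    have hterm : ∀ j : Fin n, (Int.cast (if j = i then (-1 : ℤ) else (s j : ℤ)) : K) * a j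
        = (s j : K) * a j + (if j = i then -a i else 0) := by
      intro j
      by_cases h : j = i
      · subst h; simp [hsi]
      · simp [h]
    rw [Finset.sum_congr rfl fun j _ => hterm j, Finset.sum_add_distrib,
      Finset.sum_ite_eq' Finset.univ i fun _ => -a i]
    simp [sub_eq_add_neg]
  rw [heq] at this
  exact this

lemma aux_key (a : Fin n → K)
    (ha : ∀ y : Fin n → ℤ, (∃ i, y i ≠ 0) → ∑ i, (y i : K) * a i ≠ 0)
    (b : Fin n → P)
    (hb : ∀ i : Fin n, b i ∈ supported K {j : Fin n | (j : ℕ) < (i : ℕ)})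
    (D : Derivation K P P)
    (hD : D = mkDerivation K (fun i => C (a i) * X i + b i)) :
    ∀ i : Fin n, ∃ g : P, g ∈ supported K {j : Fin n | (j : ℕ) < (i : ℕ)} ∧
      D (X i + g) = a i • (X i + g) := by
  suffices H : ∀ m : ℕ, ∀ i : Fin n, (i : ℕ) = m →
      ∃ g : P, g ∈ supported K {j : Fin n | (j : ℕ) < (i : ℕ)} ∧
        D (X i + g) = a i • (X i + g) by
    exact fun i => H (i : ℕ) i rfl
  intro m
  induction m using Nat.strong_induction_on with
  | _ m IH =>
    intro i him
    subst him
    -- the partially linearizing coordinates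
    set f : Fin n → P := fun j =>
      if h : (j : ℕ) < (i : ℕ) then X j + Classical.choose (IH (j : ℕ) h j rfl) else X j
      with hfdef
    have hg0 : ∀ j : Fin n, f j - X j ∈ supported K {k : Fin n | (k : ℕ) < (j : ℕ)} := by
      intro j
      rw [hfdef]
      dsimp only
      split
      · next h => simpa using (Classical.choose_spec (IH (j : ℕ) h j rfl)).1
      · simpa using Subalgebra.zero_mem _
    have heig : ∀ j : Fin n, (j : ℕ) < (i : ℕ) → D (f j) = a j • f j := by
      intro j h
      rw [hfdef]
      dsimp only
      rw [dif_pos h]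
      exact (Classical.choose_spec (IH (j : ℕ) h j rfl)).2
    -- represent b i as a polynomial in the f's
    obtain ⟨q, hq, hfq⟩ := Subalgebra.mem_map.mp
      (aux_supported_le_map f hg0 (i : ℕ) (hb i))
    set c : (Fin n →₀ ℕ) → K := fun s => ∑ j, (s j : K) * a j with hcdef
    have hqsupp : ∀ s ∈ q.support, ∀ j : Fin n, s j ≠ 0 → (j : ℕ) < (i : ℕ) := by
      intro s hs j hj
      have hjv : j ∈ q.vars := (mem_vars j).mpr ⟨s, hs, Finsupp.mem_support_iff.mpr hj⟩
      exact (mem_supported.mp hq) hjv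
    have hne : ∀ s ∈ q.support, a i - c s ≠ 0 := by
      intro s hs
      have hsi : s i = 0 := by
        by_contra hsi
        exact lt_irrefl _ (hqsupp s hs i hsi)
      have := aux_c_ne_a a ha i s hsi
      intro hzero
      simp only [hcdef] at hzero
      exact this (by linear_combination -hzero)
    set w : (Fin n →₀ ℕ) → K := fun s => (a i - c s)⁻¹ * coeff s q with hwdef
    set E : P := ∑ s ∈ q.support, monomial s (w s) with hEdef
    set g : P := aeval f E with hgdef
    have hEsupp : E ∈ supported K {j : Fin n | (j : ℕ) < (i : ℕ)} := by
      refine Subalgebra.sum_mem _ fun s hs => ?_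
      by_cases hw : w s = 0
      · rw [hw, monomial_zero]
        exact Subalgebra.zero_mem _
      · rw [mem_supported]
        intro j hj
        rw [vars_monomial hw] at hj
        exact hqsupp s hs j (Finsupp.mem_support_iff.mp hj)
    have hgsupp : g ∈ supported K {j : Fin n | (j : ℕ) < (i : ℕ)} :=
      aux_map_le_supported f hg0 (i : ℕ) (Subalgebra.mem_map.mpr ⟨E, hEsupp, rfl⟩)
    refine ⟨g, hgsupp, ?_⟩
    have hDg : ∀ s ∈ q.support, D (aeval f (monomial s (w s)))
        = c s • aeval f (monomial s (w s)) := fun s hs =>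
      aux_eig_monomial D f a s (w s) (fun j hj => heig j (hqsupp s hs j hj))
    have compute : a i • g - D g = b i := by
      conv_rhs => rw [← hfq, q.as_sum]
      rw [map_sum, hgdef, hEdef, map_sum, map_sum, Finset.smul_sum, ← Finset.sum_sub_distrib]
      refine Finset.sum_congr rfl fun s hs => ?_
      rw [hDg s hs, ← sub_smul, ← map_smul, smul_monomial, hwdef]
      dsimp only
      rw [smul_eq_mul, mul_inv_cancel_left₀ (hne s hs)]
    have hDX : D (X i) = C (a i) * X i + b i := by
      rw [hD, mkDerivation_X]
    rw [map_add, hDX, smul_add, smul_eq_C_mul]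
    have hDg' : D g = a i • g - b i := by
      rw [← compute]; abel
    rw [hDg']
    abel

lemma aux_D0_constcoeff (a : Fin n → K) (p : P) :
    constantCoeff (mkDerivation K (fun i : Fin n => (C (a i) * X i : P)) p) = 0 := by
  conv_lhs => rw [p.as_sum]
  rw [map_sum, map_sum]
  refine Finset.sum_eq_zero fun s _ => ?_
  rw [aux_D0_monomial]
  by_cases hs : s = 0
  · subst hs; simp
  · rw [smul_eq_C_mul, map_mul, constantCoeff_monomial, if_neg hs, mul_zero]

lemma aux_D0_surj (a : Fin n → K)
    (ha : ∀ y : Fin n → ℤ, (∃ i, y i ≠ 0) → ∑ i, (y i : K) * a i ≠ 0)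
    (p : P) (hp : constantCoeff p = 0) :
    ∃ u : P, mkDerivation K (fun i : Fin n => (C (a i) * X i : P)) u = p := by
  refine ⟨∑ s ∈ p.support, monomial s ((∑ j, (s j : K) * a j)⁻¹ * coeff s p), ?_⟩
  rw [map_sum]
  conv_rhs => rw [p.as_sum]
  refine Finset.sum_congr rfl fun s hs => ?_
  have hs0 : s ≠ 0 := by
    rintro rfl
    exact (MvPolynomial.mem_support_iff.mp hs) hp
  rw [aux_D0_monomial, smul_monomial, smul_eq_mul,
    mul_inv_cancel_left₀ (aux_c_ne a ha s hs0)]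

end Aux

theorem stmt_13 (K : Type*) [Field K] [CharZero K] (n : ℕ) (a : Fin n → K)
    (ha : ∀ y : Fin n → ℤ, (∃ i, y i ≠ 0) → ∑ i, (y i : K) * a i ≠ 0)
    (b : Fin n → MvPolynomial (Fin n) K)
    (hb : ∀ i, b i ∈ MvPolynomial.supported K {j : Fin n | j < i})
    (D : Derivation K (MvPolynomial (Fin n) K) (MvPolynomial (Fin n) K))
    (hD : D = MvPolynomial.mkDerivation K (fun i => C (a i) * X i + b i)) :
    (∃ σ : MvPolynomial (Fin n) K ≃ₐ[K] MvPolynomial (Fin n) K,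
      ∀ p, σ.symm (D (σ p)) = MvPolynomial.mkDerivation K (fun i => C (a i) * X i) p) ∧
    (∃ I : Ideal (MvPolynomial (Fin n) K),
      Set.range (⇑D : MvPolynomial (Fin n) K → MvPolynomial (Fin n) K) = I) := by
  have hb' : ∀ i : Fin n, b i ∈ supported K {j : Fin n | (j : ℕ) < (i : ℕ)} := by
    intro i
    have hset : {j : Fin n | j < i} = {j : Fin n | (j : ℕ) < (i : ℕ)} := by
      ext j; exact Fin.lt_iff_val_lt_val
    rw [← hset]; exact hb i
  choose g hg1 hg2 using aux_key a ha b hb' D hD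
  set f : Fin n → MvPolynomial (Fin n) K := fun i => X i + g i with hfdef
  have hg0 : ∀ j : Fin n, f j - X j ∈ supported K {k : Fin n | (k : ℕ) < (j : ℕ)} := by
    intro j; simpa [hfdef] using hg1 j
  have hrex : ∀ j : Fin n, ∃ rr, rr ∈ supported K {k : Fin n | (k : ℕ) < (j : ℕ)} ∧
      aeval f rr = g j := by
    intro j
    obtain ⟨rr, h1, h2⟩ := Subalgebra.mem_map.mp (aux_supported_le_map f hg0 (j : ℕ) (hg1 j))
    exact ⟨rr, h1, h2⟩
  choose r hr1 hr2 using hrex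
  set h : Fin n → MvPolynomial (Fin n) K := fun j => X j - r j with hhdef
  set φ : MvPolynomial (Fin n) K →ₐ[K] MvPolynomial (Fin n) K := aeval f with hφdef
  set ψ : MvPolynomial (Fin n) K →ₐ[K] MvPolynomial (Fin n) K := aeval h with hψdef
  have hφψ : φ.comp ψ = AlgHom.id K (MvPolynomial (Fin n) K) := by
    apply algHom_ext
    intro j
    rw [AlgHom.comp_apply, AlgHom.id_apply, hψdef, hφdef, aeval_X, hhdef]
    rw [map_sub, aeval_X, hr2, hfdef]
    ring
  have claim : ∀ j : Fin n, ψ (f j) = X j := by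
    suffices Hc : ∀ m : ℕ, ∀ j : Fin n, (j : ℕ) = m → ψ (f j) = X j by
      exact fun j => Hc (j : ℕ) j rfl
    intro m
    induction m using Nat.strong_induction_on with
    | _ m IH =>
      intro j hjm
      subst hjm
      have h2 : ψ (g j) = r j := by
        rw [← hr2 j, hψdef, hφdef]
        rw [comp_aeval_apply f
          (aeval h : MvPolynomial (Fin n) K →ₐ[K] MvPolynomial (Fin n) K) (r j)]
        exact aux_aeval_self _ _ (hr1 j) (fun k hk => IH (k : ℕ) hk k rfl)
      calc ψ (f j) = ψ (X j) + ψ (g j) := by rw [hfdef]; exact map_add ψ _ _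
        _ = X j - r j + r j := by rw [h2, hψdef, aeval_X, hhdef]
        _ = X j := by ring
  have hψφ : ψ.comp φ = AlgHom.id K (MvPolynomial (Fin n) K) := by
    apply algHom_ext
    intro j
    rw [AlgHom.comp_apply, AlgHom.id_apply, hφdef, aeval_X]
    exact claim j
  set σ : MvPolynomial (Fin n) K ≃ₐ[K] MvPolynomial (Fin n) K :=
    AlgEquiv.ofAlgHom φ ψ hφψ hψφ with hσdef
  have hσ : ∀ p, σ p = φ p := fun p => rfl
  have hσs : ∀ p, σ.symm p = ψ p := fun p => rfl
  set D' : Derivation K (MvPolynomial (Fin n) K) (MvPolynomial (Fin n) K) :=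
    { toLinearMap := ψ.toLinearMap ∘ₗ D.toLinearMap ∘ₗ φ.toLinearMap
      map_one_eq_zero' := by simp
      leibniz' := by
        intro x y
        dsimp only [LinearMap.coe_comp, Function.comp_apply, AlgHom.toLinearMap_apply,
          Derivation.coeFn_coe]
        rw [map_mul, Derivation.leibniz, map_add, smul_eq_mul, smul_eq_mul, smul_eq_mul,
          smul_eq_mul, map_mul, map_mul]
        have hx : ψ (φ x) = x := DFunLike.congr_fun hψφ x
        have hy : ψ (φ y) = y := DFunLike.congr_fun hψφ y
        rw [hx, hy] } with hD'def
  have heigf : ∀ i : Fin n, D (f i) = a i • f i := fun i => hg2 i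
  have hD'eq : D' = mkDerivation K (fun i => C (a i) * X i) := by
    apply derivation_ext
    intro i
    rw [mkDerivation_X]
    show ψ (D (φ (X i))) = _
    rw [hφdef, aeval_X, heigf i, map_smul, claim i, smul_eq_C_mul]
  have hmain : ∀ p, σ.symm (D (σ p)) = mkDerivation K (fun i => C (a i) * X i) p := by
    intro p
    rw [hσ, hσs]
    exact DFunLike.congr_fun (congrArg Derivation.toLinearMap hD'eq) p
  refine ⟨⟨σ, hmain⟩, ?_⟩
  -- the ideal
  refine ⟨Ideal.comap (σ.symm.toAlgHom.toRingHom) (RingHom.ker (constantCoeff (σ := Fin n) (R := K))), ?_⟩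
  ext p
  simp only [SetLike.mem_coe, Ideal.mem_comap, RingHom.mem_ker, Set.mem_range]
  constructor
  · rintro ⟨u, rfl⟩
    have h1 : σ.symm (D u) = mkDerivation K (fun i => C (a i) * X i) (σ.symm u) := by
      have := hmain (σ.symm u)
      rwa [AlgEquiv.apply_symm_apply] at this
    show constantCoeff (σ.symm (D u)) = 0
    rw [h1]
    exact aux_D0_constcoeff a _
  · intro hp
    obtain ⟨u, hu⟩ := aux_D0_surj a ha (σ.symm p) hp
    refine ⟨σ u, ?_⟩
    have h1 : σ.symm (D (σ u)) = σ.symm p := by rw [hmain u, hu]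
    have := congrArg σ h1
    rwa [AlgEquiv.apply_symm_apply, AlgEquiv.apply_symm_apply] at this
end

section
/- Let K be a field of characteristic zero, λ ∈ K with λ^s = 1 for least positive integer s, and δ = I − φ the E-derivation of K[x₁,...,xₙ] where φ(xᵢ) = λxᵢ + x_{i+1} for 1 ≤ i ≤ n−1 and φ(xₙ) = λxₙ. Then xₙ^{iₙ} ∈ Im δ for every positive integer iₙ, and x_{n-1}^{i_{n-1}} xₙ^{iₙ} ∈ Im δ for all i_{n-1} ≥ 0 and iₙ ≥ 1. -/
open Finset

lemma aux16 {K R : Type*} [Field K] [CharZero K] [CommRing R] [Algebra K R]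
    (φ : R →ₐ[K] R) (l : K) (hl : l ≠ 0) (u v : R)
    (hu : φ u = l • u + v) (hv : φ v = l • v) :
    ∀ a b : ℕ, (l ^ (a + b) ≠ 1 ∨ 1 ≤ b) →
      u ^ a * v ^ b ∈ LinearMap.range (LinearMap.id (R := K) - φ.toLinearMap) := by
  have hφm : ∀ a b : ℕ, φ (u ^ a * v ^ b) =
      ∑ k ∈ range (a+1), ((a.choose k : K) * l ^ (k + b)) • (u ^ k * v ^ (a + b - k)) := by
    intro a b
    rw [map_mul, map_pow, map_pow, hu, hv, add_pow, Finset.sum_mul]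
    refine Finset.sum_congr rfl fun k hk => ?_
    have hk' : k ≤ a := Nat.lt_succ_iff.mp (Finset.mem_range.mp hk)
    have h1 : a + b - k = (a - k) + b := by omega
    rw [h1, show ((a.choose k : R)) = algebraMap K R (a.choose k) from (map_natCast _ _).symm]
    simp only [Algebra.smul_def, map_mul, map_pow, pow_add]
    ring
  set S := LinearMap.range (LinearMap.id (R := K) - φ.toLinearMap) with hSdef
  have hδ : ∀ p : R, p - φ p ∈ S := fun p =>
    ⟨p, by simp [LinearMap.sub_apply]⟩
  intro a
  induction a using Nat.strong_induction_on with
  | _ a ih =>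
    intro b hb
    have hsum : ∀ (c : ℕ → K), ∑ k ∈ range a, c k • (u ^ k * v ^ (a + b - k)) ∈ S := by
      intro c
      refine Submodule.sum_mem _ fun k hk => Submodule.smul_mem _ _ ?_
      have hk' := Finset.mem_range.mp hk
      have h1 : 1 ≤ a + b - k := by omega
      have h2 : k + (a + b - k) = a + b := by omega
      exact ih k hk' (a + b - k) (Or.inr h1)
    by_cases hd : l ^ (a + b) = 1
    · have hb1 : 1 ≤ b := hb.resolve_left (by simp [hd])
      set p : R := u ^ (a+1) * v ^ (b-1) with hp
      have e1 : (a+1) + (b-1) = a + b := by omega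
      have key := hφm (a+1) (b-1)
      rw [e1] at key
      have expand : p - φ p
          = - ((((a:K)+1) * l ^ (a + (b-1))) • (u ^ a * v ^ b))
            - ∑ k ∈ range a, (((a+1).choose k : K) * l ^ (k + (b-1))) • (u ^ k * v ^ (a + b - k)) := by
        rw [key, Finset.sum_range_succ, Finset.sum_range_succ]
        have c1 : ((a+1).choose (a+1) : K) * l ^ ((a+1) + (b-1)) = 1 := by
          rw [Nat.choose_self, e1, hd, Nat.cast_one, one_mul]
        have c2 : ((a+1).choose a : K) = (a : K) + 1 := by
          rw [Nat.choose_succ_self_right]; push_cast; ring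
        have e2 : a + b - (a+1) = b - 1 := by omega
        have e3 : a + b - a = b := by omega
        rw [c1, c2, e2, e3, one_smul]
        abel
      have hc : ((a:K)+1) * l ^ (a + (b-1)) ≠ 0 := by
        apply mul_ne_zero
        · exact Nat.cast_add_one_ne_zero a
        · exact pow_ne_zero _ hl
      have hmem : (((a:K)+1) * l ^ (a + (b-1))) • (u ^ a * v ^ b) ∈ S := by
        have heq : (((a:K)+1) * l ^ (a + (b-1))) • (u ^ a * v ^ b)
            = - (p - φ p) - ∑ k ∈ range a, (((a+1).choose k : K) * l ^ (k + (b-1))) • (u ^ k * v ^ (a + b - k)) := by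
          rw [expand]; abel
        rw [heq]
        exact Submodule.sub_mem _ (Submodule.neg_mem _ (hδ p)) (hsum _)
      have := Submodule.smul_mem S (((a:K)+1) * l ^ (a + (b-1)))⁻¹ hmem
      rwa [smul_smul, inv_mul_cancel₀ hc, one_smul] at this
    · have hc : (1 - l ^ (a + b)) ≠ 0 := sub_ne_zero.mpr (Ne.symm hd)
      have expand : (u ^ a * v ^ b) - φ (u ^ a * v ^ b)
          = (1 - l ^ (a + b)) • (u ^ a * v ^ b)
            - ∑ k ∈ range a, ((a.choose k : K) * l ^ (k + b)) • (u ^ k * v ^ (a + b - k)) := by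
        rw [hφm, Finset.sum_range_succ]
        have c1 : ((a).choose a : K) * l ^ (a + b) = l ^ (a + b) := by
          rw [Nat.choose_self, Nat.cast_one, one_mul]
        have e3 : a + b - a = b := by omega
        rw [c1, e3, sub_smul, one_smul]
        abel
      have hmem : (1 - l ^ (a + b)) • (u ^ a * v ^ b) ∈ S := by
        have heq : (1 - l ^ (a + b)) • (u ^ a * v ^ b)
            = ((u ^ a * v ^ b) - φ (u ^ a * v ^ b))
              + ∑ k ∈ range a, ((a.choose k : K) * l ^ (k + b)) • (u ^ k * v ^ (a + b - k)) := by
          rw [expand]; abel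
        rw [heq]
        exact Submodule.add_mem _ (hδ _) (hsum _)
      have := Submodule.smul_mem S (1 - l ^ (a + b))⁻¹ hmem
      rwa [smul_smul, inv_mul_cancel₀ hc, one_smul] at this
open MvPolynomial

theorem stmt_16 (K : Type*) [Field K] [CharZero K] (n : ℕ) (hn : 2 ≤ n)
    (l : K) (s : ℕ) (hs : 0 < s) (hls : l ^ s = 1)
    (hleast : ∀ t : ℕ, 0 < t → l ^ t = 1 → s ≤ t)
    (φ : MvPolynomial (Fin n) K →ₐ[K] MvPolynomial (Fin n) K)
    (hφ : φ = aeval (fun i : Fin n =>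
      if h : (i : ℕ) + 1 < n then C l * X i + X ⟨(i : ℕ) + 1, h⟩ else C l * X i)) :
    (∀ m : ℕ, 1 ≤ m →
      (X (⟨n - 1, by omega⟩ : Fin n) : MvPolynomial (Fin n) K) ^ m
        ∈ Set.range (fun p : MvPolynomial (Fin n) K => p - φ p)) ∧
    (∀ i1 i2 : ℕ, 1 ≤ i2 →
      (X (⟨n - 2, by omega⟩ : Fin n) : MvPolynomial (Fin n) K) ^ i1
          * X (⟨n - 1, by omega⟩ : Fin n) ^ i2
        ∈ Set.range (fun p : MvPolynomial (Fin n) K => p - φ p)) := by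
  have hl : l ≠ 0 := by
    intro h
    rw [h, zero_pow hs.ne'] at hls
    exact zero_ne_one hls
  set u : MvPolynomial (Fin n) K := X (⟨n - 2, by omega⟩ : Fin n) with hudef
  set v : MvPolynomial (Fin n) K := X (⟨n - 1, by omega⟩ : Fin n) with hvdef
  have hv : φ v = l • v := by
    rw [hφ, hvdef, aeval_X]
    have : ¬ ((⟨n - 1, by omega⟩ : Fin n) : ℕ) + 1 < n := by simp; omega
    rw [dif_neg this, smul_eq_C_mul]
  have hu : φ u = l • u + v := by
    rw [hφ, hudef, aeval_X]
    have h2 : ((⟨n - 2, by omega⟩ : Fin n) : ℕ) + 1 < n := by simp; omega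
    rw [dif_pos h2, smul_eq_C_mul]
    congr 1
    rw [hvdef]
    congr 1
    ext
    simp
    omega
  have hrange : Set.range (fun p : MvPolynomial (Fin n) K => p - φ p)
      = (LinearMap.range (LinearMap.id (R := K) - φ.toLinearMap) : Set (MvPolynomial (Fin n) K)) := by
    ext q
    simp [LinearMap.mem_range, LinearMap.sub_apply, Set.mem_range]
  rw [hrange]
  constructor
  · intro m hm
    have := aux16 φ l hl u v hu hv 0 m (Or.inr hm)
    rwa [pow_zero, one_mul] at this
  · intro i1 i2 hi2
    exact aux16 φ l hl u v hu hv i1 i2 (Or.inr hi2)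
end

section
/- Let K be a field of characteristic zero and δ = I − φ the E-derivation of K[x₁,x₂,x₃] with φ(x₁) = x₁ + x₂, φ(x₂) = x₂ + x₃, φ(x₃) = x₃. Then x₁^{i₁} x₂^{i₂} x₃^{i₃} ∈ Im δ for all i₁, i₂, i₃ ∈ ℕ with i₃ ≥ i₁ + 1. -/
open MvPolynomial Finset

private lemma key18 (K : Type*) [Field K] [CharZero K] :
    ∀ n a b c : ℕ, 3 * a + b ≤ n → a + 1 ≤ c →
      (X 0 : MvPolynomial (Fin 3) K) ^ a * X 1 ^ b * X 2 ^ c ∈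
        LinearMap.range (LinearMap.id -
          (aeval ![X 0 + X 1, X 1 + X 2, X 2] :
            MvPolynomial (Fin 3) K →ₐ[K] MvPolynomial (Fin 3) K).toLinearMap) := by
  intro n
  induction n using Nat.strong_induction_on with
  | _ n IH =>
  intro a b c hn hc
  set φ : MvPolynomial (Fin 3) K →ₐ[K] MvPolynomial (Fin 3) K :=
    aeval ![X 0 + X 1, X 1 + X 2, X 2] with hφ
  set M := LinearMap.range (LinearMap.id - φ.toLinearMap) with hM
  obtain ⟨c', rfl⟩ : ∃ c', c = c' + 1 := ⟨c - 1, by omega⟩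
  have hac : a ≤ c' := by omega
  set m' : MvPolynomial (Fin 3) K := X 0 ^ a * X 1 ^ (b + 1) * X 2 ^ c' with hm'
  set f : ℕ → ℕ → MvPolynomial (Fin 3) K := fun i k =>
    ((a.choose i * (b + 1).choose k : ℕ) : MvPolynomial (Fin 3) K) *
      (X 0 ^ i * X 1 ^ (a - i + k) * X 2 ^ (b + 1 - k + c')) with hf
  have hmem : ∀ i k, i < a ∨ (i = a ∧ k < b) → k < b + 2 → f i k ∈ M := by
    intro i k hik hk
    simp only [hf]
    rw [← nsmul_eq_mul]
    exact nsmul_mem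
      (IH (3 * i + (a - i + k)) (by omega) i (a - i + k) (b + 1 - k + c') le_rfl (by omega)) _
  have hφX0 : φ (X 0) = X 0 + X 1 := by simp [hφ]
  have hφX1 : φ (X 1) = X 1 + X 2 := by simp [hφ]
  have hφX2 : φ (X 2) = X 2 := by simp [hφ]
  have hφm' : φ m' = ∑ i ∈ range (a + 1), ∑ k ∈ range (b + 2), f i k := by
    rw [hm', map_mul, map_mul, map_pow, map_pow, map_pow, hφX0, hφX1, hφX2,
      add_pow, add_pow, Finset.sum_mul_sum, Finset.sum_mul]
    refine Finset.sum_congr rfl fun i hi => ?_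
    rw [Finset.sum_mul]
    refine Finset.sum_congr rfl fun k hk => ?_
    simp only [hf]
    push_cast
    ring
  have h1 : f a (b + 1) = m' := by
    simp only [hf, hm', Nat.choose_self, Nat.sub_self, Nat.mul_one, Nat.cast_one, one_mul]
    ring
  have h2 : f a b = ((b + 1 : ℕ) : MvPolynomial (Fin 3) K) *
      (X 0 ^ a * X 1 ^ b * X 2 ^ (c' + 1)) := by
    simp only [hf, Nat.choose_self, Nat.choose_succ_self_right, Nat.sub_self, one_mul,
      Nat.succ_sub_one]
    have e2 : b + 1 - b + c' = c' + 1 := by omega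
    rw [e2]
    push_cast
    ring
  have hsum : φ m' - m' - (∑ i ∈ range a, ∑ k ∈ range (b + 2), f i k)
      - (∑ k ∈ range b, f a k)
      = ((b + 1 : ℕ) : MvPolynomial (Fin 3) K) * (X 0 ^ a * X 1 ^ b * X 2 ^ (c' + 1)) := by
    rw [hφm', Finset.sum_range_succ, Finset.sum_range_succ, Finset.sum_range_succ, h1, h2]
    ring
  have hb : ((b + 1 : ℕ) : MvPolynomial (Fin 3) K) *
      (X 0 ^ a * X 1 ^ b * X 2 ^ (c' + 1)) ∈ M := by
    rw [← hsum]
    refine sub_mem (sub_mem ⟨-m', ?_⟩ ?_) ?_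
    · simp only [LinearMap.sub_apply, LinearMap.id_apply, AlgHom.toLinearMap_apply, map_neg]
      abel
    · exact Submodule.sum_mem _ fun i hi => Submodule.sum_mem _ fun k hk =>
        hmem i k (Or.inl (mem_range.mp hi)) (mem_range.mp hk)
    · exact Submodule.sum_mem _ fun k hk =>
        hmem a k (Or.inr ⟨rfl, mem_range.mp hk⟩) (by have := mem_range.mp hk; omega)
  have hcast : ((b + 1 : ℕ) : MvPolynomial (Fin 3) K) *
      (X 0 ^ a * X 1 ^ b * X 2 ^ (c' + 1))
      = ((b + 1 : K)) • ((X 0 : MvPolynomial (Fin 3) K) ^ a * X 1 ^ b * X 2 ^ (c' + 1)) := by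
    rw [smul_eq_C_mul, show ((b : K) + 1) = ((b + 1 : ℕ) : K) by push_cast; ring,
      map_natCast (C : K →+* MvPolynomial (Fin 3) K) (b + 1)]
  rw [hcast] at hb
  have hne : ((b : K) + 1) ≠ 0 := by exact_mod_cast Nat.succ_ne_zero b
  exact (Submodule.smul_mem_iff M hne).mp hb

theorem stmt_18 (K : Type*) [Field K] [CharZero K]
    (φ : MvPolynomial (Fin 3) K →ₐ[K] MvPolynomial (Fin 3) K)
    (hφ : φ = aeval ![X 0 + X 1, X 1 + X 2, X 2]) :
    ∀ i1 i2 i3 : ℕ, i1 + 1 ≤ i3 →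
      (X 0 : MvPolynomial (Fin 3) K) ^ i1 * X 1 ^ i2 * X 2 ^ i3
        ∈ Set.range (fun p : MvPolynomial (Fin 3) K => p - φ p) := by
  subst hφ
  intro i1 i2 i3 h
  obtain ⟨p, hp⟩ := key18 K (3 * i1 + i2) i1 i2 i3 le_rfl h
  exact ⟨p, by simpa [LinearMap.sub_apply] using hp⟩
end

section
/- Let K be a field of characteristic zero and δ = I − φ the E-derivation of K[x₁,x₂,x₃] with φ(x₁) = x₁ + x₂, φ(x₂) = x₂ + x₃, φ(x₃) = x₃. Then x₁ ∉ Im δ; more generally x₁^{i₁} ∉ Im δ for any i₁ ≥ 1. -/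
open MvPolynomial

theorem stmt_19 (K : Type*) [Field K] [CharZero K]
    (φ : MvPolynomial (Fin 3) K →ₐ[K] MvPolynomial (Fin 3) K)
    (hφ : φ = aeval ![X 0 + X 1, X 1 + X 2, X 2]) :
    ∀ i1 : ℕ, 1 ≤ i1 →
      (X 0 : MvPolynomial (Fin 3) K) ^ i1
        ∉ Set.range (fun p : MvPolynomial (Fin 3) K => p - φ p) := by
  intro i1 hi1 ⟨p, hp⟩
  have h := congrArg (eval ![(1:K), 0, 0]) hp
  have hev : eval ![(1:K),0,0] (φ p) = eval ![(1:K),0,0] p := by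
    subst hφ
    rw [aeval_def, eval_eval₂]
    have h1 : ((eval ![(1:K),0,0]).comp (algebraMap K (MvPolynomial (Fin 3) K)))
        = RingHom.id K := by
      ext a; simp [algebraMap_eq]
    have h2 : (fun s => eval ![(1:K),0,0] (![(X 0 : MvPolynomial (Fin 3) K) + X 1,
        X 1 + X 2, X 2] s)) = ![(1:K),0,0] := by
      funext i; fin_cases i <;> simp
    rw [h1, h2, eval₂_id]
  simp only [map_sub, hev, sub_self] at h
  simp at h
end
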